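/- arXiv:1905.04327 — 6 statements merged into one kernel-verified Lean document; each statement's English description precedes it below -/
import Mathlib

section
/- Let A = k[z](σ,f) be the GWA with σ(z)=z+1 and f having a root β of multiplicity one. Set h = z−β, g = f/h, M = hA + xA ⊆ A, and M* = {p ∈ Q_gr(A) : pM ⊆ A}. Then M* = A + A x⁻¹ g, where x⁻¹g is computed in Q_gr(A) = k(z)[x,x⁻¹;σ]. -/
set_option linter.unusedSectionVars false
set_option linter.unusedVariables false


/- Abstract model of the graded quotient division ring `Q_gr(A) = k(z)[x, x⁻¹; σ]` of the
GWA `A = k[z](σ, f)` with `σ(z) = z + 1`:  a ring `Q` together with an embedding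
`φ : k(z) → Q`, a unit `x` with `x·φ(q) = φ(σ(q))·x`, such that every element of `Q` is
uniquely a finite sum `Σ φ(q_i)·xⁱ`.  Inside `Q`, the GWA `A` is the subring generated by
`φ(k[z])`, `x` and `y = φ(σ⁻¹(f))·x⁻¹`. -/

open Polynomial

/-- The shift `σ^i` on polynomials: `(σ^i p)(z) = p(z + i)`. -/
noncomputable def pshift (k : Type) [Field k] (i : ℤ) (p : k[X]) : k[X] :=
  p.comp (X + C (i : k))

/-- The element `y = φ(σ⁻¹(f)) · x⁻¹` of `Q`. -/
noncomputable def gwaY (k : Type) [Field k] (Q : Type) [Ring Q]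
    (σ : RatFunc k ≃+* RatFunc k) (φ : RatFunc k →+* Q) (x : Qˣ) (f : k[X]) : Q :=
  φ (σ.symm (algebraMap k[X] (RatFunc k) f)) * ((x⁻¹ : Qˣ) : Q)

/-- The copy of the GWA `A = k[z](σ, f)` inside `Q`: the subring generated by the image
of `k[z]`, by `x`, and by `y`. -/
noncomputable def gwaSubring (k : Type) [Field k] (Q : Type) [Ring Q]
    (σ : RatFunc k ≃+* RatFunc k) (φ : RatFunc k →+* Q) (x : Qˣ) (f : k[X]) : Subring Q :=
  Subring.closure
    ({(x : Q), gwaY k Q σ φ x f} ∪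
      Set.range fun p : k[X] => φ (algebraMap k[X] (RatFunc k) p))

section PShift
variable {k : Type} [Field k] [CharZero k]

lemma pshift_zero (p : k[X]) : pshift k 0 p = p := by
  simp [pshift]

lemma pshift_one (i : ℤ) : pshift k i 1 = 1 := by simp [pshift]

lemma pshift_mul (i : ℤ) (p q : k[X]) :
    pshift k i (p * q) = pshift k i p * pshift k i q := by
  simp [pshift, mul_comp]

lemma pshift_add (i : ℤ) (p q : k[X]) :
    pshift k i (p + q) = pshift k i p + pshift k i q := by
  simp [pshift, add_comp]

lemma pshift_pshift (i j : ℤ) (p : k[X]) :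
    pshift k i (pshift k j p) = pshift k (i + j) p := by
  simp only [pshift, comp_assoc]
  congr 1
  simp only [add_comp, X_comp, C_comp, Int.cast_add, C_add]
  ring

lemma pshift_ne_zero (i : ℤ) {p : k[X]} (hp : p ≠ 0) : pshift k i p ≠ 0 := by
  intro h
  apply hp
  have := congrArg (pshift k (-i)) h
  rw [pshift_pshift, neg_add_cancel, pshift_zero] at this
  exact by simpa [pshift] using this
  
/-- `Gpoly f n = σ⁻¹(f) σ⁻²(f) ⋯ σ⁻ⁿ(f)`. -/
noncomputable def Gpoly (f : k[X]) : ℕ → k[X]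
  | 0 => 1
  | n+1 => Gpoly f n * pshift k (-(n+1) : ℤ) f

noncomputable def Fpoly (f : k[X]) (i : ℤ) : k[X] := Gpoly f (-i).toNat

lemma Fpoly_of_nonneg (f : k[X]) {i : ℤ} (h : 0 ≤ i) : Fpoly f i = 1 := by
  have : (-i).toNat = 0 := by omega
  rw [Fpoly, this]; rfl

lemma Gpoly_add (f : k[X]) (n m : ℕ) :
    Gpoly f (n + m) = Gpoly f n * pshift k (-(n:ℤ)) (Gpoly f m) := by
  induction m with
  | zero => simp [Gpoly, pshift_one]
  | succ m ih =>
      have hidx : (-(n:ℤ)) + (-((m:ℤ)+1)) = -(((n+m:ℕ):ℤ)+1) := by push_cast; ring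
      have : n + (m+1) = (n + m) + 1 := rfl
      rw [this, Gpoly, ih, Gpoly, pshift_mul, pshift_pshift, hidx, mul_assoc]

lemma Fpoly_dvd (f : k[X]) (i j : ℤ) :
    Fpoly f (i + j) ∣ Fpoly f i * pshift k i (Fpoly f j) := by
  rcases le_or_gt 0 (i + j) with hij | hij
  · rw [Fpoly_of_nonneg f hij]; exact one_dvd _
  rcases le_or_gt 0 i with hi | hi
  · -- i ≥ 0, j < 0, i + j < 0
    rw [Fpoly_of_nonneg f hi, one_mul]
    have hj : j < 0 := by omega
    -- Fpoly f j = Gpoly f (-j).toNat, (-j).toNat = i.toNat + (-(i+j)).toNat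
    have h1 : (-j).toNat = i.toNat + (-(i+j)).toNat := by omega
    have h2 : Fpoly f j = Gpoly f i.toNat * pshift k (-(i.toNat:ℤ)) (Fpoly f (i+j)) := by
      rw [Fpoly, h1, Gpoly_add]; rfl
    rw [h2, pshift_mul, pshift_pshift]
    have : i + -(i.toNat : ℤ) = 0 := by omega
    rw [this, pshift_zero]
    exact dvd_mul_left _ _
  rcases le_or_gt 0 j with hj | hj
  · -- i < 0, j ≥ 0
    rw [Fpoly_of_nonneg f hj, pshift_one, mul_one]
    have h1 : (-i).toNat = (-(i+j)).toNat + j.toNat := by omega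
    have h2 : Fpoly f i = Fpoly f (i+j) * pshift k (-((-(i+j)).toNat:ℤ)) (Gpoly f j.toNat) := by
      rw [Fpoly, h1, Gpoly_add]; rfl
    exact ⟨_, h2⟩
  · -- i < 0, j < 0 : equality
    have h1 : (-(i+j)).toNat = (-i).toNat + (-j).toNat := by omega
    have h2 : Fpoly f (i+j) = Fpoly f i * pshift k (-((-i).toNat:ℤ)) (Fpoly f j) := by
      rw [Fpoly, h1, Gpoly_add]; rfl
    have : -((-i).toNat : ℤ) = i := by omega
    rw [h2, this]

end PShift

section Comm
variable {k : Type} [Field k] [CharZero k] {Q : Type} [Ring Q]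
variable (σ : RatFunc k ≃+* RatFunc k)
variable (hσ : ∀ p : k[X], σ (algebraMap k[X] (RatFunc k) p)
        = algebraMap k[X] (RatFunc k) (p.comp (X + 1)))

include hσ

local notation "PA" => algebraMap k[X] (RatFunc k)

lemma sigma_poly (p : k[X]) : σ (PA p) = PA (pshift k 1 p) := by
  rw [hσ p]
  congr 1
  simp [pshift]

lemma sigma_symm_poly (p : k[X]) : σ.symm (PA p) = PA (pshift k (-1) p) := by
  apply σ.injective
  rw [RingEquiv.apply_symm_apply, sigma_poly σ hσ, pshift_pshift]
  norm_num
  rw [pshift_zero]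

lemma sigma_zpow_poly (i : ℤ) (p : k[X]) : (σ ^ i) (PA p) = PA (pshift k i p) := by
  induction i using Int.induction_on generalizing p with
  | zero => rw [pshift_zero]; rfl
  | succ n ih =>
      have h1 : (σ ^ ((n:ℤ) + 1)) (PA p) = (σ ^ (n:ℤ)) (σ (PA p)) := by
        rw [zpow_add_one]; rfl
      rw [h1, sigma_poly σ hσ, ih (pshift k 1 p), pshift_pshift]
  | pred n ih =>
      have h1 : (σ ^ (-(n:ℤ) - 1)) (PA p) = (σ ^ (-(n:ℤ))) (σ.symm (PA p)) := by
        rw [sub_eq_add_neg, zpow_add, zpow_neg_one]; rfl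
      rw [h1, sigma_symm_poly σ hσ, ih (pshift k (-1) p), pshift_pshift, show -(n:ℤ) + -1 = -(n:ℤ) - 1 by ring]

variable (φ : RatFunc k →+* Q) (x : Qˣ)
variable (hx : ∀ q : RatFunc k, (x : Q) * φ q = φ (σ q) * (x : Q))
omit hσ
include hx

lemma xinv_comm (q : RatFunc k) :
    ((x⁻¹ : Qˣ) : Q) * φ q = φ (σ.symm q) * ((x⁻¹ : Qˣ) : Q) := by
  have h := hx (σ.symm q)
  rw [RingEquiv.apply_symm_apply] at h
  calc ((x⁻¹ : Qˣ) : Q) * φ q = ((x⁻¹:Qˣ):Q) * (φ q * (x:Q)) * ((x⁻¹:Qˣ):Q) := by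
        rw [mul_assoc, mul_assoc, Units.mul_inv, mul_one]
    _ = ((x⁻¹:Qˣ):Q) * ((x:Q) * φ (σ.symm q)) * ((x⁻¹:Qˣ):Q) := by rw [h]
    _ = φ (σ.symm q) * ((x⁻¹ : Qˣ) : Q) := by
        rw [← mul_assoc, Units.inv_mul, one_mul]

lemma xzpow_comm (i : ℤ) (q : RatFunc k) :
    ((x ^ i : Qˣ) : Q) * φ q = φ ((σ ^ i) q) * ((x ^ i : Qˣ) : Q) := by
  induction i using Int.induction_on generalizing q with
  | zero =>
      show ((x ^ (0:ℤ) : Qˣ) : Q) * φ q = φ ((σ ^ (0:ℤ)) q) * ((x ^ (0:ℤ) : Qˣ) : Q)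
      rw [zpow_zero, zpow_zero]
      simp only [Units.val_one, one_mul, mul_one]
      rfl
  | succ n ih =>
      have h1 : ((x ^ ((n:ℤ)+1) : Qˣ) : Q) = ((x^(n:ℤ):Qˣ):Q) * (x:Q) := by
        rw [zpow_add_one]; rfl
      have h2 : ∀ r, (σ ^ ((n:ℤ) + 1)) r = (σ ^ (n:ℤ)) (σ r) := by
        intro r; rw [zpow_add_one]; rfl
      rw [h1, mul_assoc, hx, ← mul_assoc, ih (σ q), h2, mul_assoc]
  | pred n ih =>
      have h1 : ((x ^ (-(n:ℤ)-1) : Qˣ) : Q) = ((x^(-(n:ℤ)):Qˣ):Q) * ((x⁻¹:Qˣ):Q) := by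
        rw [sub_eq_add_neg, zpow_add, zpow_neg_one]; rfl
      have h2 : ∀ r, (σ ^ (-(n:ℤ) - 1)) r = (σ ^ (-(n:ℤ))) (σ.symm r) := by
        intro r; rw [sub_eq_add_neg, zpow_add, zpow_neg_one]; rfl
      rw [h1, mul_assoc, xinv_comm σ φ x hx, ← mul_assoc, ih (σ.symm q), h2, mul_assoc]

end Comm

lemma xzpow_mul {Q : Type} [Ring Q] (x : Qˣ) (i j : ℤ) :
    ((x ^ i : Qˣ) : Q) * ((x ^ j : Qˣ) : Q) = ((x ^ (i+j) : Qˣ) : Q) := by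
  rw [zpow_add]; rfl

section Core
variable {k : Type} [Field k] [CharZero k] {Q : Type} [Ring Q]
variable (σ : RatFunc k ≃+* RatFunc k) (φ : RatFunc k →+* Q) (x : Qˣ) (f : k[X])

local notation "PA" => algebraMap k[X] (RatFunc k)

/-- Monomial `φ(q)·xⁱ`. -/
noncomputable def monoFn (i : ℤ) (q : RatFunc k) : Q := φ q * ((x ^ i : Qˣ) : Q)

/-- The admissible monomials: coefficient divisible by `Fpoly f i` in degree `i`. -/
def monoSet : Set Q :=
  {w | ∃ i : ℤ, ∃ p : k[X], w = monoFn φ x i (PA (Fpoly f i * p))}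

lemma monoFn_zero (i : ℤ) : monoFn φ x i 0 = 0 := by
  simp [monoFn]

lemma monoFn_add (i : ℤ) (q r : RatFunc k) :
    monoFn φ x i (q + r) = monoFn φ x i q + monoFn φ x i r := by
  simp [monoFn, add_mul]

lemma one_mem_monoSet : (1 : Q) ∈ monoSet φ x f := by
  refine ⟨0, 1, ?_⟩
  rw [Fpoly_of_nonneg f le_rfl, mul_one, monoFn]
  simp

variable (hσ : ∀ p : k[X], σ (algebraMap k[X] (RatFunc k) p)
        = algebraMap k[X] (RatFunc k) (p.comp (X + 1)))
variable (hx : ∀ q : RatFunc k, (x : Q) * φ q = φ (σ q) * (x : Q))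

include hσ hx

lemma monoSet_mul {a b : Q} (ha : a ∈ monoSet φ x f) (hb : b ∈ monoSet φ x f) :
    a * b ∈ monoSet φ x f := by
  obtain ⟨i, p, rfl⟩ := ha
  obtain ⟨j, q, rfl⟩ := hb
  obtain ⟨E, hE⟩ := Fpoly_dvd f i j
  refine ⟨i + j, E * (p * pshift k i q), ?_⟩
  have hpoly : Fpoly f i * p * pshift k i (Fpoly f j * q)
      = Fpoly f (i+j) * (E * (p * pshift k i q)) := by
    rw [pshift_mul]; linear_combination (p * pshift k i q) * hE
  simp only [monoFn]
  set a := φ (PA (Fpoly f i * p)) with ha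
  set b := φ (PA (Fpoly f j * q)) with hb
  set xi := ((x ^ i : Qˣ) : Q) with hxi
  set xj := ((x ^ j : Qˣ) : Q) with hxj
  calc a * xi * (b * xj) = a * (xi * b) * xj := by
        rw [mul_assoc a xi (b * xj), ← mul_assoc xi b xj, ← mul_assoc]
    _ = a * (φ ((σ ^ i) (PA (Fpoly f j * q))) * xi) * xj := by
        rw [hxi, xzpow_comm σ φ x hx]
    _ = (a * φ (PA (pshift k i (Fpoly f j * q)))) * (xi * xj) := by
        rw [sigma_zpow_poly σ hσ]; rw [mul_assoc, mul_assoc, mul_assoc]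
    _ = φ (PA (Fpoly f (i + j) * (E * (p * pshift k i q)))) * ((x ^ (i+j) : Qˣ) : Q) := by
        rw [ha, ← RingHom.map_mul φ, ← RingHom.map_mul (algebraMap k[X] (RatFunc k)),
          hpoly, hxi, hxj, xzpow_mul]

omit hσ hx

/-- The `ℤ`-graded additive subgroup which will be shown to coincide with `gwaSubring`. -/
noncomputable def gwaGrp : AddSubgroup Q := AddSubgroup.closure (monoSet φ x f)

include hσ hx

lemma gwaGrp_mul {a b : Q} (ha : a ∈ gwaGrp φ x f) (hb : b ∈ gwaGrp φ x f) :
    a * b ∈ gwaGrp φ x f := by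
  induction ha using AddSubgroup.closure_induction generalizing b with
  | mem u hu =>
      induction hb using AddSubgroup.closure_induction with
      | mem v hv => exact AddSubgroup.subset_closure (monoSet_mul σ φ x f hσ hx hu hv)
      | zero => rw [mul_zero]; exact zero_mem _
      | add v w _ _ hv hw => rw [mul_add]; exact add_mem hv hw
      | neg v _ hv => rw [mul_neg]; exact neg_mem hv
  | zero => rw [zero_mul]; exact zero_mem _
  | add u v hu hv ihu ihv => rw [add_mul]; exact add_mem (ihu hb) (ihv hb)
  | neg u hu ihu => rw [neg_mul]; exact neg_mem (ihu hb)

end Core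

section Core2
variable {k : Type} [Field k] [CharZero k] {Q : Type} [Ring Q]
variable (σ : RatFunc k ≃+* RatFunc k) (φ : RatFunc k →+* Q) (x : Qˣ) (f : k[X])
variable (hσ : ∀ p : k[X], σ (algebraMap k[X] (RatFunc k) p)
        = algebraMap k[X] (RatFunc k) (p.comp (X + 1)))
variable (hx : ∀ q : RatFunc k, (x : Q) * φ q = φ (σ q) * (x : Q))

local notation "PA" => algebraMap k[X] (RatFunc k)

include hσ hx

lemma gwaY_eq : gwaY k Q σ φ x f = monoFn φ x (-1) (PA (Gpoly f 1)) := by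
  have h1 : Gpoly f 1 = pshift k (-1) f := by
    show Gpoly f 0 * pshift k _ f = _
    rw [show Gpoly f 0 = 1 from rfl, one_mul]
    norm_num
  rw [gwaY, monoFn, sigma_symm_poly σ hσ, h1, zpow_neg_one]

lemma ypow_eq (n : ℕ) :
    (gwaY k Q σ φ x f) ^ n = monoFn φ x (-(n:ℤ)) (PA (Gpoly f n)) := by
  induction n with
  | zero =>
      have h0 : Gpoly f 0 = 1 := rfl
      rw [pow_zero, monoFn, h0]
      simp
  | succ n ih =>
      rw [pow_succ, ih, gwaY_eq σ φ x f hσ hx, monoFn, monoFn, monoFn]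
      rw [mul_assoc, ← mul_assoc ((x ^ (-(n:ℤ)) : Qˣ) : Q), xzpow_comm σ φ x hx,
        sigma_zpow_poly σ hσ, mul_assoc, xzpow_mul, ← mul_assoc,
        ← RingHom.map_mul φ, ← RingHom.map_mul (algebraMap k[X] (RatFunc k))]
      congr 2
      · rw [← Gpoly_add]
      · push_cast
        ring

lemma monoSet_subset_gwa : monoSet φ x f ⊆ (gwaSubring k Q σ φ x f : Set Q) := by
  rintro w ⟨i, p, rfl⟩
  have hφmem : ∀ r : k[X], φ (PA r) ∈ gwaSubring k Q σ φ x f := fun r =>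
    Subring.subset_closure (Or.inr ⟨r, rfl⟩)
  rcases le_or_gt 0 i with hi | hi
  · rw [monoFn]
    apply mul_mem (hφmem _)
    have : ((x ^ i : Qˣ) : Q) = ((x : Q)) ^ i.toNat := by
      rw [← Units.val_pow_eq_pow_val, ← zpow_natCast, Int.toNat_of_nonneg hi]
    rw [this]
    exact Subring.pow_mem _
      (Subring.subset_closure (Set.mem_union_left _ (Set.mem_insert _ _))) _
  · -- negative degree: use y powers
    set n := (-i).toNat with hn
    have hFi : Fpoly f i = Gpoly f n := rfl
    have hxi : ((x ^ i : Qˣ) : Q) = ((x ^ (-(n:ℤ)) : Qˣ) : Q) := by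
      rw [show -(n:ℤ) = i by omega]
    have : monoFn φ x i (PA (Fpoly f i * p))
        = φ (PA p) * (gwaY k Q σ φ x f) ^ n := by
      rw [ypow_eq σ φ x f hσ hx, monoFn, monoFn, hxi, ← mul_assoc, ← RingHom.map_mul φ,
        ← RingHom.map_mul (algebraMap k[X] (RatFunc k)), hFi, mul_comm p]
    have hy : gwaY k Q σ φ x f ∈ gwaSubring k Q σ φ x f :=
      Subring.subset_closure (Set.mem_union_left _ (Set.mem_insert_of_mem _ rfl))
    rw [this]
    exact mul_mem (hφmem p) (Subring.pow_mem _ hy n)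

lemma gwa_eq_grp : (gwaSubring k Q σ φ x f : Set Q) = (gwaGrp φ x f : Set Q) := by
  apply le_antisymm
  · intro w hw
    induction hw using Subring.closure_induction with
    | mem u hu =>
        rcases hu with (rfl | rfl) | ⟨p, rfl⟩
        · -- u = x
          apply AddSubgroup.subset_closure
          refine ⟨1, 1, ?_⟩
          rw [Fpoly_of_nonneg f (by norm_num), mul_one, monoFn]
          simp
        · -- u = y
          apply AddSubgroup.subset_closure
          rw [gwaY_eq σ φ x f hσ hx]
          refine ⟨-1, 1, ?_⟩
          rw [mul_one]
          rfl
        · -- u = φ (PA p)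
          apply AddSubgroup.subset_closure
          refine ⟨0, p, ?_⟩
          rw [Fpoly_of_nonneg f le_rfl, one_mul, monoFn, zpow_zero, Units.val_one, mul_one]
    | zero => exact zero_mem _
    | one => exact AddSubgroup.subset_closure (one_mem_monoSet φ x f)
    | add u v hu hv ihu ihv => exact add_mem ihu ihv
    | neg u hu ihu => exact neg_mem ihu
    | mul u v hu hv ihu ihv => exact gwaGrp_mul σ φ x f hσ hx ihu ihv
  · intro w hw
    refine AddSubgroup.closure_induction ?_ ?_ ?_ ?_ hw
    · exact fun u hu => monoSet_subset_gwa σ φ x f hσ hx hu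
    · exact zero_mem _
    · exact fun u v _ _ hu hv => add_mem hu hv
    · exact fun u _ hu => neg_mem hu

omit hσ hx

lemma mem_grp_iff (w : Q) :
    w ∈ gwaGrp φ x f ↔ ∃ c : ℤ →₀ RatFunc k,
      (∀ i : ℤ, ∃ p : k[X], c i = PA (Fpoly f i * p)) ∧
      w = c.sum fun i q => φ q * ((x ^ i : Qˣ) : Q) := by
  constructor
  · intro hw
    refine AddSubgroup.closure_induction ?_ ?_ ?_ ?_ hw
    · rintro u ⟨i, p, rfl⟩
      refine ⟨Finsupp.single i (PA (Fpoly f i * p)), ?_, ?_⟩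
      · intro j
        rcases eq_or_ne i j with rfl | hij
        · exact ⟨p, by rw [Finsupp.single_eq_same]⟩
        · exact ⟨0, by rw [Finsupp.single_eq_of_ne' hij, mul_zero]; simp⟩
      · rw [Finsupp.sum_single_index]
        · rfl
        · rw [map_zero, zero_mul]
    · exact ⟨0, fun i => ⟨0, by simp⟩, by simp⟩
    · rintro u v _ _ ⟨c, hc, rfl⟩ ⟨d, hd, rfl⟩
      refine ⟨c + d, ?_, ?_⟩
      · intro i
        obtain ⟨p, hp⟩ := hc i
        obtain ⟨q, hq⟩ := hd i
        refine ⟨p + q, ?_⟩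
        rw [Finsupp.add_apply, hp, hq, mul_add]
        exact (map_add (algebraMap k[X] (RatFunc k)) _ _).symm
      · rw [Finsupp.sum_add_index']
        · intro i; rw [map_zero, zero_mul]
        · intro i q r; rw [map_add, add_mul]
    · rintro u _ ⟨c, hc, rfl⟩
      refine ⟨-c, ?_, ?_⟩
      · intro i
        obtain ⟨p, hp⟩ := hc i
        refine ⟨-p, ?_⟩
        rw [Finsupp.neg_apply, hp, mul_neg]
        exact (map_neg (algebraMap k[X] (RatFunc k)) _).symm
      · rw [Finsupp.sum_neg_index]
        · rw [← Finsupp.sum_neg]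
          congr 1
          ext i q
          rw [map_neg, neg_mul]
        · intro i; rw [map_zero, zero_mul]
  · rintro ⟨c, hc, rfl⟩
    apply AddSubgroup.sum_mem
    intro i hi
    obtain ⟨p, hp⟩ := hc i
    exact AddSubgroup.subset_closure ⟨i, p, by rw [monoFn, hp]⟩

end Core2

section Decomp
variable {k : Type} [Field k] [CharZero k]

local notation "PA" => algebraMap k[X] (RatFunc k)

lemma Gpoly_ne_zero {f : k[X]} (hf0 : f ≠ 0) (n : ℕ) : Gpoly f n ≠ 0 := by
  induction n with
  | zero => exact one_ne_zero
  | succ n ih =>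
      show Gpoly f n * pshift k (-(n+1) : ℤ) f ≠ 0
      exact mul_ne_zero ih (pshift_ne_zero _ hf0)

lemma Fpoly_ne_zero {f : k[X]} (hf0 : f ≠ 0) (i : ℤ) : Fpoly f i ≠ 0 :=
  Gpoly_ne_zero hf0 _

lemma Fpoly_pred (f : k[X]) {i : ℤ} (hi : i < 0) :
    Fpoly f i = Fpoly f (i+1) * pshift k i f := by
  set n := (-(i+1)).toNat with hn
  have h1 : (-i).toNat = n + 1 := by omega
  have h2 : Fpoly f i = Gpoly f n * pshift k (-(n+1) : ℤ) f := by
    rw [Fpoly, h1]; rfl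
  rw [h2, show (-(n+1) : ℤ) = i by omega]
  rfl

lemma coeff_decomp (f g : k[X]) (β : k) (hf0 : f ≠ 0)
    (hfact : f = (X - C β) * g) (i : ℤ) (c : RatFunc k)
    (h1 : ∃ p' : k[X], c = PA (Fpoly f (i+1) * p'))
    (h2 : ∃ s : k[X], c * PA (pshift k i (X - C β)) = PA (Fpoly f i * s)) :
    ∃ u v : k[X], c = PA (Fpoly f i * u) + PA (Fpoly f (i+1) * v) * PA (pshift k i g) := by
  have hinj : Function.Injective (algebraMap k[X] (RatFunc k)) :=
    IsFractionRing.injective k[X] (RatFunc k)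
  rcases le_or_gt 0 i with hi | hi
  · obtain ⟨p', hp'⟩ := h1
    refine ⟨p', 0, ?_⟩
    rw [hp', Fpoly_of_nonneg f hi, Fpoly_of_nonneg f (by omega), mul_zero]
    simp
  · obtain ⟨p', hp'⟩ := h1
    obtain ⟨s, hs⟩ := h2
    have key : Fpoly f (i+1) * p' * pshift k i (X - C β) = Fpoly f i * s := by
      apply hinj
      rw [map_mul (algebraMap k[X] (RatFunc k)), ← hp']
      exact hs
    have hpred : Fpoly f i = Fpoly f (i+1) * pshift k i f := Fpoly_pred f hi
    have hfs : pshift k i f = pshift k i (X - C β) * pshift k i g := by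
      rw [← pshift_mul, ← hfact]
    have hcan : (Fpoly f (i+1) * pshift k i (X - C β)) ≠ 0 :=
      mul_ne_zero (Fpoly_ne_zero hf0 _) (pshift_ne_zero _ (X_sub_C_ne_zero β))
    have hps : p' = pshift k i g * s := by
      apply mul_left_cancel₀ hcan
      calc Fpoly f (i+1) * pshift k i (X - C β) * p'
          = Fpoly f (i+1) * p' * pshift k i (X - C β) := by ring
        _ = Fpoly f i * s := key
        _ = Fpoly f (i+1) * pshift k i (X - C β) * (pshift k i g * s) := by
            rw [hpred, hfs]; ring
    refine ⟨0, s, ?_⟩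
    rw [hp', hps, mul_zero, RingHom.map_zero, zero_add,
      ← map_mul (algebraMap k[X] (RatFunc k))]
    congr 1
    ring

end Decomp

/-- Let `β` be a simple root of `f`, `h = z − β`, `g = f/h`, and
`M = hA + xA ⊆ A`.  Then the dual `M* = {p ∈ Q_gr(A) : pM ⊆ A}` equals `A + A·x⁻¹g`. -/
theorem dual_of_hA_plus_xA
    (k : Type) [Field k] [CharZero k] [IsAlgClosed k]
    (Q : Type) [Ring Q]
    (σ : RatFunc k ≃+* RatFunc k)
    (hσ : ∀ p : k[X], σ (algebraMap k[X] (RatFunc k) p)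
        = algebraMap k[X] (RatFunc k) (p.comp (X + 1)))
    (φ : RatFunc k →+* Q) (hφ : Function.Injective φ)
    (x : Qˣ)
    (hx : ∀ q : RatFunc k, (x : Q) * φ q = φ (σ q) * (x : Q))
    (hbasis : ∀ w : Q, ∃! c : ℤ →₀ RatFunc k,
        w = c.sum fun i q => φ q * ((x ^ i : Qˣ) : Q))
    (f : k[X]) (hf : f.Monic) (hf0 : f ≠ 0)
    (β : k) (g : k[X]) (hfact : f = (X - C β) * g) (hsimpleroot : ¬ (X - C β) ∣ g)
    (M : AddSubgroup Q)
    (hM : ∀ w : Q, w ∈ M ↔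
        ∃ a ∈ gwaSubring k Q σ φ x f, ∃ b ∈ gwaSubring k Q σ φ x f,
          w = φ (algebraMap k[X] (RatFunc k) (X - C β)) * a + (x : Q) * b) :
    {p : Q | ∀ w ∈ M, p * w ∈ gwaSubring k Q σ φ x f} =
      {p : Q | ∃ a ∈ gwaSubring k Q σ φ x f, ∃ b ∈ gwaSubring k Q σ φ x f,
        p = a + b * (((x⁻¹ : Qˣ) : Q) * φ (algebraMap k[X] (RatFunc k) g))} := by
  have hmemA : ∀ w : Q, w ∈ gwaSubring k Q σ φ x f ↔ w ∈ gwaGrp φ x f := fun w =>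
    Set.ext_iff.mp (gwa_eq_grp σ φ x f hσ hx) w
  have hφmem : ∀ r : k[X], φ (algebraMap k[X] (RatFunc k) r) ∈ gwaSubring k Q σ φ x f :=
    fun r => Subring.subset_closure (Or.inr ⟨r, rfl⟩)
  have hxmem : (x : Q) ∈ gwaSubring k Q σ φ x f :=
    Subring.subset_closure (Set.mem_union_left _ (Set.mem_insert _ _))
  have hymem : gwaY k Q σ φ x f ∈ gwaSubring k Q σ φ x f :=
    Subring.subset_closure (Set.mem_union_left _ (Set.mem_insert_of_mem _ rfl))
  ext p
  simp only [Set.mem_setOf_eq]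
  constructor
  · -- hard direction: dual elements have the given shape
    intro hp
    have hhM : φ (algebraMap k[X] (RatFunc k) (X - C β)) ∈ M := by
      rw [hM]
      exact ⟨1, one_mem _, 0, zero_mem _, by rw [mul_one, mul_zero, add_zero]⟩
    have hxM : (x : Q) ∈ M := by
      rw [hM]
      exact ⟨0, zero_mem _, 1, one_mem _, by rw [mul_zero, mul_one, zero_add]⟩
    have h1 : p * φ (algebraMap k[X] (RatFunc k) (X - C β)) ∈ gwaGrp φ x f :=
      (hmemA _).mp (hp _ hhM)
    have h2 : p * (x : Q) ∈ gwaGrp φ x f := (hmemA _).mp (hp _ hxM)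
    obtain ⟨c, hc, -⟩ := hbasis p
    -- coefficients of `p * x`
    obtain ⟨d, hd, hdsum⟩ := (mem_grp_iff φ x f _).mp h2
    have hcx : p * (x : Q) = (c.mapDomain (· + 1)).sum fun i q => φ q * ((x ^ i : Qˣ) : Q) := by
      rw [Finsupp.sum_mapDomain_index (fun i => by rw [map_zero, zero_mul])
        (fun i q r => by rw [map_add, add_mul]), hc, Finsupp.sum_mul]
      apply Finsupp.sum_congr
      intro i _
      rw [mul_assoc, show ((x:Q)) = ((x ^ (1:ℤ) : Qˣ) : Q) by rw [zpow_one], xzpow_mul]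
    have hcd : c.mapDomain (· + 1) = d := by
      obtain ⟨e, -, heq⟩ := hbasis (p * (x : Q))
      rw [heq _ hcx, heq _ hdsum]
    have hA : ∀ i : ℤ, ∃ p' : k[X],
        c i = algebraMap k[X] (RatFunc k) (Fpoly f (i+1) * p') := by
      intro i
      obtain ⟨p', hp'⟩ := hd (i + 1)
      refine ⟨p', ?_⟩
      rw [← hp', ← hcd, Finsupp.mapDomain_apply (add_left_injective 1)]
    -- coefficients of `p * φ(h)`
    obtain ⟨d₂, hd₂, hd₂sum⟩ := (mem_grp_iff φ x f _).mp h1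
    set hb : RatFunc k := algebraMap k[X] (RatFunc k) (X - C β) with hhb
    set e : ℤ →₀ RatFunc k := Finsupp.onFinset c.support
      (fun i => c i * (σ ^ i) hb)
      (fun i hne => Finsupp.mem_support_iff.mpr (fun h0 => hne (by simp [h0]))) with he
    have hce : p * φ hb = e.sum fun i q => φ q * ((x ^ i : Qˣ) : Q) := by
      rw [hc, Finsupp.sum_mul, he]
      rw [Finsupp.onFinset_sum _ (fun i => by rw [map_zero, zero_mul])]
      apply Finset.sum_congr rfl
      intro i _
      show φ (c i) * ((x ^ i : Qˣ) : Q) * φ hb = φ (c i * (σ ^ i) hb) * ((x ^ i : Qˣ) : Q)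
      rw [mul_assoc, xzpow_comm σ φ x hx, ← mul_assoc, ← RingHom.map_mul φ]
    have hed : e = d₂ := by
      obtain ⟨e', -, heq⟩ := hbasis (p * φ hb)
      rw [heq _ hce, heq _ hd₂sum]
    have hB : ∀ i : ℤ, ∃ s : k[X], c i * algebraMap k[X] (RatFunc k) (pshift k i (X - C β))
        = algebraMap k[X] (RatFunc k) (Fpoly f i * s) := by
      intro i
      obtain ⟨s, hs⟩ := hd₂ i
      refine ⟨s, ?_⟩
      rw [← hs, ← hed]
      show c i * _ = c i * (σ ^ i) hb
      rw [hhb, sigma_zpow_poly σ hσ]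
    have hdecomp : ∀ i : ℤ, ∃ u v : k[X],
        c i = algebraMap k[X] (RatFunc k) (Fpoly f i * u)
          + algebraMap k[X] (RatFunc k) (Fpoly f (i+1) * v)
            * algebraMap k[X] (RatFunc k) (pshift k i g) :=
      fun i => coeff_decomp f g β hf0 hfact i (c i) (hA i) (hB i)
    choose u v huv using hdecomp
    refine ⟨∑ i ∈ c.support, φ (algebraMap k[X] (RatFunc k) (Fpoly f i * u i))
        * ((x ^ i : Qˣ) : Q), ?_,
      ∑ i ∈ c.support, φ (algebraMap k[X] (RatFunc k) (Fpoly f (i+1) * v i))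
        * ((x ^ (i+1) : Qˣ) : Q), ?_, ?_⟩
    · rw [hmemA]
      exact AddSubgroup.sum_mem _ fun i _ => AddSubgroup.subset_closure ⟨i, u i, rfl⟩
    · rw [hmemA]
      exact AddSubgroup.sum_mem _ fun i _ => AddSubgroup.subset_closure ⟨i + 1, v i, rfl⟩
    · rw [hc, Finsupp.sum, Finset.sum_mul, ← Finset.sum_add_distrib]
      apply Finset.sum_congr rfl
      intro i _
      rw [huv i, map_add φ, add_mul]
      congr 1
      have hxsplit : ((x ^ (i:ℤ) : Qˣ) : Q) = ((x ^ (i+1) : Qˣ) : Q) * ((x⁻¹ : Qˣ) : Q) := by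
        rw [show (x⁻¹ : Qˣ) = x ^ (-1 : ℤ) from (zpow_neg_one x).symm, xzpow_mul,
          show (i + 1 + (-1) : ℤ) = i from by ring]
      calc φ (algebraMap k[X] (RatFunc k) (Fpoly f (i+1) * v i)
              * algebraMap k[X] (RatFunc k) (pshift k i g)) * ((x ^ i : Qˣ) : Q)
          = φ (algebraMap k[X] (RatFunc k) (Fpoly f (i+1) * v i))
              * (φ (algebraMap k[X] (RatFunc k) (pshift k i g)) * ((x ^ i : Qˣ) : Q)) := by
            rw [RingHom.map_mul φ, mul_assoc]
        _ = φ (algebraMap k[X] (RatFunc k) (Fpoly f (i+1) * v i))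
              * (((x ^ i : Qˣ) : Q) * φ (algebraMap k[X] (RatFunc k) g)) := by
            rw [← sigma_zpow_poly σ hσ, ← xzpow_comm σ φ x hx]
        _ = φ (algebraMap k[X] (RatFunc k) (Fpoly f (i+1) * v i)) * ((x ^ (i+1) : Qˣ) : Q)
              * (((x⁻¹ : Qˣ) : Q) * φ (algebraMap k[X] (RatFunc k) g)) := by
            rw [hxsplit]; rw [mul_assoc, mul_assoc]
  · -- easy direction
    rintro ⟨a, ha, b, hb, rfl⟩ w hw
    rw [hM] at hw
    obtain ⟨a', ha', b', hb', rfl⟩ := hw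
    have hwA : φ (algebraMap k[X] (RatFunc k) (X - C β)) * a' + (x : Q) * b'
        ∈ gwaSubring k Q σ φ x f :=
      add_mem (mul_mem (hφmem _) ha') (mul_mem hxmem hb')
    rw [add_mul]
    apply add_mem (mul_mem ha hwA)
    -- second piece
    have key : ((x⁻¹ : Qˣ) : Q) * φ (algebraMap k[X] (RatFunc k) g)
        * (φ (algebraMap k[X] (RatFunc k) (X - C β)) * a' + (x : Q) * b')
        = gwaY k Q σ φ x f * a'
          + φ (algebraMap k[X] (RatFunc k) (pshift k (-1) g)) * b' := by
      rw [mul_add]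
      congr 1
      · calc ((x⁻¹ : Qˣ) : Q) * φ (algebraMap k[X] (RatFunc k) g)
              * (φ (algebraMap k[X] (RatFunc k) (X - C β)) * a')
            = ((x⁻¹ : Qˣ) : Q) * (φ (algebraMap k[X] (RatFunc k) g)
              * φ (algebraMap k[X] (RatFunc k) (X - C β))) * a' := by
              rw [mul_assoc, mul_assoc, mul_assoc]
          _ = ((x⁻¹ : Qˣ) : Q) * φ (algebraMap k[X] (RatFunc k) f) * a' := by
              rw [← RingHom.map_mul φ, ← map_mul (algebraMap k[X] (RatFunc k)),
                show g * (X - C β) = f by rw [hfact]; ring]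
          _ = gwaY k Q σ φ x f * a' := by
              rw [xinv_comm σ φ x hx, gwaY]
      · calc ((x⁻¹ : Qˣ) : Q) * φ (algebraMap k[X] (RatFunc k) g) * ((x : Q) * b')
            = (((x⁻¹ : Qˣ) : Q) * φ (algebraMap k[X] (RatFunc k) g) * (x : Q)) * b' := by
              rw [mul_assoc, mul_assoc, mul_assoc]
          _ = φ (algebraMap k[X] (RatFunc k) (pshift k (-1) g)) * b' := by
              rw [xinv_comm σ φ x hx, sigma_symm_poly σ hσ,
                mul_assoc (φ (algebraMap k[X] (RatFunc k) (pshift k (-1) g)))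
                  ((x⁻¹ : Qˣ) : Q) ((x : Q)), Units.inv_mul, mul_one]
    rw [mul_assoc, key]
    exact mul_mem hb (add_mem (mul_mem hymem ha')
      (mul_mem (hφmem _) hb'))
end

section
/- With A = R(σ,f) a GWA satisfying Hypothesis 2.1, β a root of f of multiplicity one, h = z−β, g = f h⁻¹, and M = hA + xA: the endomorphism ring B = {p ∈ Q_gr(A) : pM ⊆ M} contains the elements X = x, Y = x⁻¹σ(h)g, Z = z, and these satisfy the defining relations of the GWA R(σ, f′) with f′ = σ(h)g, namely XY = f′(Z), YX = σ⁻¹(f′)(Z), XZ = σ(Z)X, YZ = σ⁻¹(Z)Y. -/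
/- Abstract model of the graded quotient division ring `Q_gr(A) = k(z)[x, x⁻¹; σ]` of the
GWA `A = k[z](σ, f)` with `σ(z) = z + 1`:  a ring `Q` together with an embedding
`φ : k(z) → Q`, a unit `x` with `x·φ(q) = φ(σ(q))·x`, such that every element of `Q` is
uniquely a finite sum `Σ φ(q_i)·xⁱ`.  Inside `Q`, the GWA `A` is the subring generated by
`φ(k[z])`, `x` and `y = φ(σ⁻¹(f))·x⁻¹`. -/

open Polynomial

/-! Everything follows from the commutation rule `x·p(z) = p(z+1)·x`. Since `M = hA + xA` is a
right `A`-module generated by `h` and `x`, an element `p` stabilises `M` as soon as `p·h` and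
`p·x` lie in `M`, and for the three candidates these products are explicit:
`x·h = h·x + x`, `Y·h = h·y` (because `σ(h)·g·h = σ(h)·f`), `Y·x = h·σ⁻¹(g)`, while `z`
commutes with `h` and `z·x = x·(z - 1)`. -/

section ShiftCommutation

variable {R Q : Type*} [CommRing R] [Ring Q] {ψ : R[X] →+* Q} {x : Qˣ}

theorem X_sub_C_sub_one_comp_X_sub_one (β : R) :
    (X - C (β - 1)).comp (X - 1 : R[X]) = X - C β := by
  simp only [sub_comp, X_comp, C_comp, one_comp, C_sub, C_1]
  ring

theorem inv_mul_eq_comp_X_sub_one_mul_inv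
    (hxψ : ∀ p : R[X], (x : Q) * ψ p = ψ (p.comp (X + 1)) * x) (p : R[X]) :
    ((x⁻¹ : Qˣ) : Q) * ψ p = ψ (p.comp (X - 1)) * ((x⁻¹ : Qˣ) : Q) := by
  rw [Units.inv_mul_eq_iff_eq_mul, ← mul_assoc, hxψ, comp_assoc]
  simp

theorem inv_mul_mul_self_eq_comp_X_sub_one
    (hxψ : ∀ p : R[X], (x : Q) * ψ p = ψ (p.comp (X + 1)) * x) (p : R[X]) :
    ((x⁻¹ : Qˣ) : Q) * ψ p * x = ψ (p.comp (X - 1)) := by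
  rw [inv_mul_eq_comp_X_sub_one_mul_inv hxψ, Units.inv_mul_cancel_right]

theorem mul_map_X (hxψ : ∀ p : R[X], (x : Q) * ψ p = ψ (p.comp (X + 1)) * x) :
    (x : Q) * ψ X = ψ (X + 1) * x := by
  rw [hxψ, X_comp]

theorem inv_mul_mul_map_X (hxψ : ∀ p : R[X], (x : Q) * ψ p = ψ (p.comp (X + 1)) * x)
    (p : R[X]) :
    ((x⁻¹ : Qˣ) : Q) * ψ p * ψ X = ψ (X - 1) * (((x⁻¹ : Qˣ) : Q) * ψ p) := by
  rw [mul_assoc, ← map_mul, mul_comm p X, map_mul, ← mul_assoc,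
    inv_mul_eq_comp_X_sub_one_mul_inv hxψ, X_comp, mul_assoc]

theorem mul_X_sub_C (hxψ : ∀ p : R[X], (x : Q) * ψ p = ψ (p.comp (X + 1)) * x) (β : R) :
    (x : Q) * ψ (X - C β) = ψ (X - C β) * x + x := by
  have hshift : (X - C β).comp (X + 1 : R[X]) = X - C β + 1 := by
    simp only [sub_comp, X_comp, C_comp]
    ring
  rw [hxψ, hshift, map_add, map_one, add_mul, one_mul]

theorem shifted_mul_X_sub_C (hxψ : ∀ p : R[X], (x : Q) * ψ p = ψ (p.comp (X + 1)) * x)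
    (β : R) (g : R[X]) :
    ((x⁻¹ : Qˣ) : Q) * ψ ((X - C (β - 1)) * g) * ψ (X - C β)
      = ψ (X - C β) * (ψ (((X - C β) * g).comp (X - 1)) * ((x⁻¹ : Qˣ) : Q)) := by
  rw [mul_assoc, ← map_mul, mul_right_comm, mul_assoc, inv_mul_eq_comp_X_sub_one_mul_inv hxψ,
    mul_comp, X_sub_C_sub_one_comp_X_sub_one, map_mul, mul_assoc]

end ShiftCommutation

section Stabilizer

variable {Q : Type*} [Ring Q] {S : Subring Q} {M : AddSubgroup Q} {u v : Q}

theorem mul_mem_of_mul_generators_mem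
    (hM : ∀ w, w ∈ M ↔ ∃ a ∈ S, ∃ b ∈ S, w = u * a + v * b) {p : Q}
    (hu : p * u ∈ M) (hv : p * v ∈ M) : ∀ w ∈ M, p * w ∈ M := by
  have mul_mem_right : ∀ w ∈ M, ∀ s ∈ S, w * s ∈ M := by
    intro w hw s hs
    obtain ⟨a, ha, b, hb, rfl⟩ := (hM w).1 hw
    exact (hM _).2 ⟨a * s, S.mul_mem ha hs, b * s, S.mul_mem hb hs, by noncomm_ring⟩
  intro w hw
  obtain ⟨a, ha, b, hb, rfl⟩ := (hM w).1 hw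
  rw [mul_add, ← mul_assoc, ← mul_assoc]
  exact M.add_mem (mul_mem_right _ hu a ha) (mul_mem_right _ hv b hb)

theorem left_mul_mem (hM : ∀ w, w ∈ M ↔ ∃ a ∈ S, ∃ b ∈ S, w = u * a + v * b) {a : Q}
    (ha : a ∈ S) : u * a ∈ M :=
  (hM _).2 ⟨a, ha, 0, S.zero_mem, by rw [mul_zero, add_zero]⟩

theorem right_mul_mem (hM : ∀ w, w ∈ M ↔ ∃ a ∈ S, ∃ b ∈ S, w = u * a + v * b) {b : Q}
    (hb : b ∈ S) : v * b ∈ M :=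
  (hM _).2 ⟨0, S.zero_mem, b, hb, by rw [mul_zero, zero_add]⟩

end Stabilizer

section EndomorphismRing

variable {R Q : Type*} [CommRing R] [Ring Q] {ψ : R[X] →+* Q} {x : Qˣ} {S : Subring Q}
  {M : AddSubgroup Q} {β : R}

theorem unit_mul_mem (hxψ : ∀ p : R[X], (x : Q) * ψ p = ψ (p.comp (X + 1)) * x)
    (hxS : (x : Q) ∈ S)
    (hM : ∀ w, w ∈ M ↔ ∃ a ∈ S, ∃ b ∈ S, w = ψ (X - C β) * a + x * b) :
    ∀ w ∈ M, (x : Q) * w ∈ M := by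
  refine mul_mem_of_mul_generators_mem hM ?_ (right_mul_mem hM hxS)
  rw [mul_X_sub_C hxψ]
  exact M.add_mem (left_mul_mem hM hxS) (by simpa only [mul_one] using right_mul_mem hM S.one_mem)

theorem inv_mul_shifted_mul_mem (hxψ : ∀ p : R[X], (x : Q) * ψ p = ψ (p.comp (X + 1)) * x)
    {f g : R[X]} (hfact : f = (X - C β) * g) (hψS : ∀ p, ψ p ∈ S)
    (hyS : ψ (f.comp (X - 1)) * ((x⁻¹ : Qˣ) : Q) ∈ S)
    (hM : ∀ w, w ∈ M ↔ ∃ a ∈ S, ∃ b ∈ S, w = ψ (X - C β) * a + x * b) :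
    ∀ w ∈ M, ((x⁻¹ : Qˣ) : Q) * ψ ((X - C (β - 1)) * g) * w ∈ M := by
  refine mul_mem_of_mul_generators_mem hM ?_ ?_
  · rw [shifted_mul_X_sub_C hxψ, ← hfact]
    exact left_mul_mem hM hyS
  · rw [inv_mul_mul_self_eq_comp_X_sub_one hxψ, mul_comp, X_sub_C_sub_one_comp_X_sub_one,
      map_mul]
    exact left_mul_mem hM (hψS _)

theorem map_X_mul_mem (hxψ : ∀ p : R[X], (x : Q) * ψ p = ψ (p.comp (X + 1)) * x)
    (hψS : ∀ p, ψ p ∈ S)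
    (hM : ∀ w, w ∈ M ↔ ∃ a ∈ S, ∃ b ∈ S, w = ψ (X - C β) * a + x * b) :
    ∀ w ∈ M, ψ X * w ∈ M := by
  refine mul_mem_of_mul_generators_mem hM ?_ ?_
  · rw [← map_mul, mul_comm, map_mul]
    exact left_mul_mem hM (hψS X)
  · have hXx : ψ X * x = x * ψ (X - 1) := by
      rw [hxψ, sub_comp, X_comp, one_comp, add_sub_cancel_right]
    rw [hXx]
    exact right_mul_mem hM (hψS _)

end EndomorphismRing

theorem symm_algebraMap_eq_comp_X_sub_one {k : Type} [Field k]
    {σ : RatFunc k ≃+* RatFunc k}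
    (hσ : ∀ p : k[X], σ (algebraMap k[X] (RatFunc k) p)
        = algebraMap k[X] (RatFunc k) (p.comp (X + 1))) (p : k[X]) :
    σ.symm (algebraMap k[X] (RatFunc k) p) = algebraMap k[X] (RatFunc k) (p.comp (X - 1)) := by
  rw [RingEquiv.symm_apply_eq, hσ, comp_assoc]
  simp

theorem endomorphism_ring_is_GWA_general
    (k : Type) [Field k]
    (Q : Type) [Ring Q]
    (σ : RatFunc k ≃+* RatFunc k)
    (hσ : ∀ p : k[X], σ (algebraMap k[X] (RatFunc k) p)
        = algebraMap k[X] (RatFunc k) (p.comp (X + 1)))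
    (φ : RatFunc k →+* Q)
    (x : Qˣ)
    (hx : ∀ q : RatFunc k, (x : Q) * φ q = φ (σ q) * (x : Q))
    (f : k[X])
    (β : k) (g : k[X]) (hfact : f = (X - C β) * g)
    (M : AddSubgroup Q)
    (hM : ∀ w : Q, w ∈ M ↔
        ∃ a ∈ gwaSubring k Q σ φ x f, ∃ b ∈ gwaSubring k Q σ φ x f,
          w = φ (algebraMap k[X] (RatFunc k) (X - C β)) * a + (x : Q) * b) :
    (x : Q) ∈ {p : Q | ∀ w ∈ M, p * w ∈ M} ∧
      ((x⁻¹ : Qˣ) : Q) * φ (algebraMap k[X] (RatFunc k) ((X - C (β - 1)) * g))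
          ∈ {p : Q | ∀ w ∈ M, p * w ∈ M} ∧
        φ (algebraMap k[X] (RatFunc k) X) ∈ {p : Q | ∀ w ∈ M, p * w ∈ M} ∧
          (x : Q) * (((x⁻¹ : Qˣ) : Q) * φ (algebraMap k[X] (RatFunc k) ((X - C (β - 1)) * g)))
              = φ (algebraMap k[X] (RatFunc k) ((X - C (β - 1)) * g)) ∧
            (((x⁻¹ : Qˣ) : Q) * φ (algebraMap k[X] (RatFunc k) ((X - C (β - 1)) * g))) * (x : Q)
                = φ (algebraMap k[X] (RatFunc k) (((X - C (β - 1)) * g).comp (X - 1))) ∧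
              (x : Q) * φ (algebraMap k[X] (RatFunc k) X)
                  = φ (algebraMap k[X] (RatFunc k) (X + 1)) * (x : Q) ∧
                (((x⁻¹ : Qˣ) : Q) * φ (algebraMap k[X] (RatFunc k) ((X - C (β - 1)) * g)))
                      * φ (algebraMap k[X] (RatFunc k) X)
                    = φ (algebraMap k[X] (RatFunc k) (X - 1)) *
                      (((x⁻¹ : Qˣ) : Q) *
                        φ (algebraMap k[X] (RatFunc k) ((X - C (β - 1)) * g))) := by
  let ψ : k[X] →+* Q := φ.comp (algebraMap k[X] (RatFunc k))
  have hxψ : ∀ p : k[X], (x : Q) * ψ p = ψ (p.comp (X + 1)) * x := fun p => by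
    simp only [ψ, RingHom.comp_apply, hx, hσ]
  have hψS : ∀ p, ψ p ∈ gwaSubring k Q σ φ x f := fun p =>
    Subring.subset_closure (Or.inr ⟨p, rfl⟩)
  have hxS : (x : Q) ∈ gwaSubring k Q σ φ x f :=
    Subring.subset_closure (Or.inl (Set.mem_insert _ _))
  have hyS : ψ (f.comp (X - 1)) * ((x⁻¹ : Qˣ) : Q) ∈ gwaSubring k Q σ φ x f := by
    have hy : gwaY k Q σ φ x f ∈ gwaSubring k Q σ φ x f :=
      Subring.subset_closure (Or.inl (Set.mem_insert_of_mem _ rfl))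
    rw [gwaY, symm_algebraMap_eq_comp_X_sub_one hσ] at hy
    exact hy
  exact ⟨unit_mul_mem hxψ hxS hM, inv_mul_shifted_mul_mem hxψ hfact hψS hyS hM,
    map_X_mul_mem hxψ hψS hM, Units.mul_inv_cancel_left x _,
    inv_mul_mul_self_eq_comp_X_sub_one hxψ _, mul_map_X hxψ,
    inv_mul_mul_map_X hxψ ((X - C (β - 1)) * g)⟩

/-- With `β` a simple root of `f`, `h = z − β`, `g = f/h` and
`M = hA + xA`, the endomorphism ring `B = {p ∈ Q_gr(A) : pM ⊆ M}` contains
`X = x`, `Y = x⁻¹·σ(h)·g` and `Z = z`, and these satisfy the defining relations of the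
GWA `R(σ, f′)` with `f′ = σ(h)g`:  `XY = f′`, `YX = σ⁻¹(f′)`, `XZ = σ(Z)X`,
`YZ = σ⁻¹(Z)Y`. -/
theorem endomorphism_ring_is_GWA
    (k : Type) [Field k] [CharZero k] [IsAlgClosed k]
    (Q : Type) [Ring Q]
    (σ : RatFunc k ≃+* RatFunc k)
    (hσ : ∀ p : k[X], σ (algebraMap k[X] (RatFunc k) p)
        = algebraMap k[X] (RatFunc k) (p.comp (X + 1)))
    (φ : RatFunc k →+* Q) (hφ : Function.Injective φ)
    (x : Qˣ)
    (hx : ∀ q : RatFunc k, (x : Q) * φ q = φ (σ q) * (x : Q))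
    (hbasis : ∀ w : Q, ∃! c : ℤ →₀ RatFunc k,
        w = c.sum fun i q => φ q * ((x ^ i : Qˣ) : Q))
    (f : k[X]) (hf : f.Monic) (hf0 : f ≠ 0)
    (β : k) (g : k[X]) (hfact : f = (X - C β) * g) (hsimpleroot : ¬ (X - C β) ∣ g)
    (M : AddSubgroup Q)
    (hM : ∀ w : Q, w ∈ M ↔
        ∃ a ∈ gwaSubring k Q σ φ x f, ∃ b ∈ gwaSubring k Q σ φ x f,
          w = φ (algebraMap k[X] (RatFunc k) (X - C β)) * a + (x : Q) * b) :
    (x : Q) ∈ {p : Q | ∀ w ∈ M, p * w ∈ M} ∧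
      ((x⁻¹ : Qˣ) : Q) * φ (algebraMap k[X] (RatFunc k) ((X - C (β - 1)) * g))
          ∈ {p : Q | ∀ w ∈ M, p * w ∈ M} ∧
        φ (algebraMap k[X] (RatFunc k) X) ∈ {p : Q | ∀ w ∈ M, p * w ∈ M} ∧
          (x : Q) * (((x⁻¹ : Qˣ) : Q) * φ (algebraMap k[X] (RatFunc k) ((X - C (β - 1)) * g)))
              = φ (algebraMap k[X] (RatFunc k) ((X - C (β - 1)) * g)) ∧
            (((x⁻¹ : Qˣ) : Q) * φ (algebraMap k[X] (RatFunc k) ((X - C (β - 1)) * g))) * (x : Q)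
                = φ (algebraMap k[X] (RatFunc k) (((X - C (β - 1)) * g).comp (X - 1))) ∧
              (x : Q) * φ (algebraMap k[X] (RatFunc k) X)
                  = φ (algebraMap k[X] (RatFunc k) (X + 1)) * (x : Q) ∧
                (((x⁻¹ : Qˣ) : Q) * φ (algebraMap k[X] (RatFunc k) ((X - C (β - 1)) * g)))
                      * φ (algebraMap k[X] (RatFunc k) X)
                    = φ (algebraMap k[X] (RatFunc k) (X - 1)) *
                      (((x⁻¹ : Qˣ) : Q) *
                        φ (algebraMap k[X] (RatFunc k) ((X - C (β - 1)) * g))) :=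
  endomorphism_ring_is_GWA_general k Q σ hσ φ x hx f β g hfact M hM
end

section
/- Let B = R[b_{i,j} : i ∈ [1,r], j ∈ ℤ]/(b_{i,j}² − σ^{−j}((z−α_i)^{n_i})), where R = k[z] or k[z,z⁻¹]. Then B is not noetherian: writing γ_{i,j} for the value of σ^{−j}((z−α_i)^{n_i}) at z = 1, the ideals I_n = (b_{1,j} + √γ_{1,j} : 0 ≤ j < n) of B/(z−1) form a strictly ascending chain. -/
/-!
Choosing a square root of `σ^{-j}((z - α_i)^{n_i})(c)` for every `b_{i,j}`, with an arbitrary sign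
for each, gives a ring homomorphism `B → k` over `z ↦ c`. Take `c = α_i - 1` instead of the paper's
`c = 1`: then the values `γ_j = (-(j + 1))^{n_i}` at `b_{i,j}`, `j ∈ ℕ`, never vanish. The
evaluation using `-√γ_j` for `j < N` and `+√γ_N` at `j = N` kills `b_{i,j} + √γ_j` for `j < N` but
sends `b_{i,N} + √γ_N` to `2√γ_N ≠ 0`, so the ideals `(b_{i,j} + √γ_j : j < N)` increase strictly.
-/
/- The commutative ring `B = R[b_{i,j} : i in [1,r], j in Z]/(b_{i,j}^2 - sigma^{-j}((z-a_i)^{n_i}))`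
with `R = k[z]`, `sigma(z) = z + 1` (so `sigma^{-j}((z-a_i)^{n_i}) = (z - (a_i + j))^{n_i}`). -/

open Polynomial

/-- The element `sigma^{-j}((z - a_i)^{n_i}) = (z - (a_i + j))^{n_i}` of `R = k[z]`. -/
noncomputable def Bgen (k : Type) [Field k] {r : ℕ} (α : Fin r → k) (n : Fin r → ℕ)
    (i : Fin r) (j : ℤ) : k[X] :=
  (X - C (α i + (j : k))) ^ n i

/-- The ideal of relations `b_{i,j}^2 = sigma^{-j}((z - a_i)^{n_i})`. -/
noncomputable def Brel (k : Type) [Field k] (r : ℕ) (α : Fin r → k) (n : Fin r → ℕ) :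
    Ideal (MvPolynomial (Fin r × ℤ) k[X]) :=
  Ideal.span {p | ∃ (i : Fin r) (j : ℤ),
    p = MvPolynomial.X (i, j) ^ 2 - MvPolynomial.C (Bgen k α n i j)}

/-- The ring `B`. -/
noncomputable abbrev Bring (k : Type) [Field k] (r : ℕ) (α : Fin r → k) (n : Fin r → ℕ) :
    Type :=
  MvPolynomial (Fin r × ℤ) k[X] ⧸ Brel k r α n

theorem strictMono_span_image_Iio {A : Type*} [Semiring A] (e : ℕ → A)
    (h : ∀ N, ∃ J : Ideal A, (∀ m < N, e m ∈ J) ∧ e N ∉ J) :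
    StrictMono fun N => Ideal.span (e '' Set.Iio N) := by
  refine strictMono_nat_of_lt_succ fun N => lt_of_le_of_ne ?_ fun hEq => ?_
  · exact Ideal.span_mono (Set.image_mono fun m hm => Nat.lt_succ_of_lt hm)
  · obtain ⟨J, hJ, hN⟩ := h N
    have hle : Ideal.span (e '' Set.Iio N) ≤ J := by
      rw [Ideal.span_le]
      rintro _ ⟨m, hm, rfl⟩
      exact hJ m hm
    have hmem : e N ∈ Ideal.span (e '' Set.Iio (N + 1)) :=
      Ideal.subset_span ⟨N, Nat.lt_succ_self N, rfl⟩
    exact hN (hle (hEq ▸ hmem))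

namespace Bring

variable {k : Type} [Field k] {r : ℕ} (α : Fin r → k) (n : Fin r → ℕ)

theorem eval_Bgen_sub_one_ne_zero [CharZero k] (i : Fin r) (m : ℕ) :
    (Bgen k α n i m).eval (α i - 1) ≠ 0 := by
  have h : α i - 1 - (α i + ((m : ℤ) : k)) = -((m + 1 : ℕ) : k) := by push_cast; ring
  simp only [Bgen, eval_pow, eval_sub, eval_X, eval_C, h]
  exact pow_ne_zero _ (neg_ne_zero.mpr (Nat.cast_ne_zero.mpr m.succ_ne_zero))

/-- The generator `b_{i,j}` of `B`. -/
noncomputable def gen (p : Fin r × ℤ) : Bring k r α n :=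
  Ideal.Quotient.mk _ (MvPolynomial.X p)

variable {α n} {S : Type*} [CommRing S] (f : k[X] →+* S) (v : Fin r × ℤ → S)

theorem Brel_le_ker_eval₂Hom (hv : ∀ i j, v (i, j) ^ 2 = f (Bgen k α n i j)) :
    Brel k r α n ≤ RingHom.ker (MvPolynomial.eval₂Hom f v) := by
  rw [Brel, Ideal.span_le]
  rintro _ ⟨i, j, rfl⟩
  simp [hv]

noncomputable def lift (hv : ∀ i j, v (i, j) ^ 2 = f (Bgen k α n i j)) : Bring k r α n →+* S :=
  Ideal.Quotient.lift _ (MvPolynomial.eval₂Hom f v) fun _ h =>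
    RingHom.mem_ker.mp (Brel_le_ker_eval₂Hom f v hv h)

variable {f v} (hv : ∀ i j, v (i, j) ^ 2 = f (Bgen k α n i j))

@[simp]
theorem lift_gen (p : Fin r × ℤ) : lift f v hv (gen α n p) = v p :=
  Ideal.Quotient.lift_mk _ _ _ |>.trans (MvPolynomial.eval₂Hom_X' f v p)

@[simp]
theorem lift_algebraMap (a : k) : lift f v hv (algebraMap k (Bring k r α n) a) = f (C a) := by
  rw [← Ideal.Quotient.mk_algebraMap, lift, Ideal.Quotient.lift_mk, MvPolynomial.algebraMap_apply]
  simp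

variable [CharZero k] (α n) (i : Fin r) (s : Fin r × ℤ → k)

theorem strictMono_span_gen_add_sqrt
    (hs : ∀ p : Fin r × ℤ, s p ^ 2 = (Bgen k α n p.1 p.2).eval (α i - 1)) :
    StrictMono fun N : ℕ => Ideal.span
      ((fun m : ℕ => gen α n (i, m) + algebraMap k (Bring k r α n) (s (i, m))) '' Set.Iio N) := by
  refine strictMono_span_image_Iio _ fun N => ?_
  let v : Fin r × ℤ → k := fun p => if p = (i, (N : ℤ)) then s p else -s p
  have hv : ∀ i' j, v (i', j) ^ 2 = evalRingHom (α i - 1) (Bgen k α n i' j) := by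
    intro i' j
    simp only [v]
    split_ifs <;> simp [hs (i', j)]
  refine ⟨RingHom.ker (lift _ v hv), fun m hm => ?_, ?_⟩
  · have hne : ((i, (m : ℤ)) : Fin r × ℤ) ≠ (i, (N : ℤ)) := by simp [hm.ne]
    simp [v, hne]
  · have hsN : s (i, N) ≠ 0 := by
      intro h
      apply eval_Bgen_sub_one_ne_zero α n i N
      simpa [h] using (hs (i, N)).symm
    simpa [v, ← two_mul] using hsN

end Bring

theorem Bring_not_noetherian_general
    (k : Type) [Field k] [CharZero k] [IsAlgClosed k] (r : ℕ) (α : Fin r → k) (n : Fin r → ℕ)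
    (hr : 0 < r) :
    ¬ IsNoetherianRing (Bring k r α n) ∧
      ∃ I : ℕ → Ideal (Bring k r α n), StrictMono I := by
  let i : Fin r := ⟨0, hr⟩
  choose s hs using fun p : Fin r × ℤ =>
    IsAlgClosed.exists_pow_nat_eq ((Bgen k α n p.1 p.2).eval (α i - 1)) two_pos
  have hI := Bring.strictMono_span_gen_add_sqrt α n i s hs
  exact ⟨fun _ => not_strictMono_of_wellFoundedGT _ hI, _, hI⟩

/-- The ring `B` is not noetherian: there is a strictly ascending
chain of ideals (in the paper, induced by `I_n = (b_{1,j} + sqrt(γ_{1,j}) : 0 ≤ j < n)` in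
`B/(z−1)`). -/
theorem Bring_not_noetherian
    (k : Type) [Field k] [CharZero k] [IsAlgClosed k] (r : ℕ) (α : Fin r → k) (n : Fin r → ℕ)
    (hr : 0 < r) (hn : ∀ i, 0 < n i)
    (hα : ∀ i j : Fin r, ∀ t : ℤ, α i = α j + (t : k) → i = j) :
    ¬ IsNoetherianRing (Bring k r α n) ∧
      ∃ I : ℕ → Ideal (Bring k r α n), StrictMono I :=
  Bring_not_noetherian_general k r α n hr
end

section
/- If n_i is odd for every i ∈ [1,r], then the ring B = R[b_{i,j} : i ∈ [1,r], j ∈ ℤ]/(b_{i,j}² − σ^{−j}((z−α_i)^{n_i})) is an integral domain. -/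
/- The commutative ring `B = R[b_{i,j} : i in [1,r], j in Z]/(b_{i,j}^2 - sigma^{-j}((z-a_i)^{n_i}))`
with `R = k[z]`, `sigma(z) = z + 1` (so `sigma^{-j}((z-a_i)^{n_i}) = (z - (a_i + j))^{n_i}`). -/

open Polynomial

open Polynomial IntermediateField

namespace BringAux

set_option linter.unusedSectionVars false
set_option maxHeartbeats 1000000

variable (k : Type) [Field k] [CharZero k]

noncomputable abbrev K0 : Type := FractionRing (Polynomial k)
noncomputable abbrev KK : Type := AlgebraicClosure (K0 k)

noncomputable def ρ : k[X] →+* KK k :=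
  (algebraMap (K0 k) (KK k)).comp (algebraMap k[X] (K0 k))

lemma ρ_injective : Function.Injective (ρ k) :=
  (algebraMap (K0 k) (KK k)).injective.comp (IsFractionRing.injective _ _)

instance : CharZero (K0 k) :=
  charZero_of_injective_algebraMap (IsFractionRing.injective k[X] (K0 k))

instance : CharZero (KK k) :=
  charZero_of_injective_algebraMap (algebraMap (K0 k) (KK k)).injective

noncomputable def sqr (γ : k) : KK k :=
  (IsAlgClosed.exists_pow_nat_eq (ρ k (X - C γ)) two_pos).choose

lemma sqr_spec (γ : k) : (sqr k γ) ^ 2 = ρ k (X - C γ) :=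
  (IsAlgClosed.exists_pow_nat_eq (ρ k (X - C γ)) two_pos).choose_spec

variable {ι : Type} (c : ι → k)

noncomputable def τ (v : ι) : KK k := sqr k (c v)

lemma τ_sq (v : ι) : τ k c v ^ 2 = ρ k (X - C (c v)) := sqr_spec k (c v)

lemma τ_sq' (v : ι) :
    τ k c v ^ 2 = algebraMap (K0 k) (KK k) (algebraMap k[X] (K0 k) (X - C (c v))) :=
  τ_sq k c v

/-- A product of distinct linear factors (at least one) is not a square in `k(X)`. -/
lemma not_square (hc : Function.Injective c) (W : Finset ι) (hW : W.Nonempty) (w : K0 k) :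
    w ^ 2 ≠ algebraMap k[X] (K0 k) (∏ v ∈ W, (X - C (c v))) := by
  intro hw
  set h : k[X] := ∏ v ∈ W, (X - C (c v)) with hh
  have hsep : h.Separable :=
    separable_prod_X_sub_C_iff'.mpr fun x _ y _ hxy => hc hxy
  have hsf : Squarefree h := hsep.squarefree
  have hint : IsIntegral k[X] w := by
    refine ⟨X ^ 2 - C h, monic_X_pow_sub_C h two_ne_zero, ?_⟩
    simp [hw]
  obtain ⟨r, hr⟩ := IsIntegrallyClosed.isIntegral_iff.mp hint
  have hr2 : r ^ 2 = h := by
    apply IsFractionRing.injective k[X] (K0 k)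
    rw [map_pow, hr, hw]
  have hu : IsUnit r := hsf r ⟨1, by rw [← hr2]; ring⟩
  have hdeg : h.natDegree = W.card := by
    rw [hh, natDegree_prod_of_monic _ _ fun v _ => monic_X_sub_C (c v)]
    simp
  have hd0 : h.natDegree = 0 := by
    rw [← hr2, natDegree_pow, Polynomial.natDegree_eq_zero_of_isUnit hu, mul_zero]
  have := hW.card_pos
  omega


noncomputable def FF (V : Finset ι) : IntermediateField (K0 k) (KK k) :=
  IntermediateField.adjoin (K0 k) (τ k c '' ↑V)

lemma τ_mem {V : Finset ι} {v : ι} (hv : v ∈ V) : τ k c v ∈ FF k c V :=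
  subset_adjoin _ _ ⟨v, hv, rfl⟩

lemma ρ_mem (V : Finset ι) (f : k[X]) : ρ k f ∈ FF k c V :=
  (FF k c V).algebraMap_mem (algebraMap k[X] (K0 k) f)

lemma algebraMap_mem' (V : Finset ι) (u : K0 k) :
    algebraMap (K0 k) (KK k) u ∈ FF k c V := (FF k c V).algebraMap_mem u

lemma e_ne_zero (v₀ : ι) : τ k c v₀ ≠ 0 := by
  intro h
  have := τ_sq k c v₀
  rw [h] at this
  have : ρ k (X - C (c v₀)) = 0 := by simpa using this.symm
  have hXC : (X - C (c v₀) : k[X]) ≠ 0 := X_sub_C_ne_zero (c v₀)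
  exact hXC (by
    have hinj : Function.Injective (ρ k) :=
      (algebraMap (K0 k) (KK k)).injective.comp (IsFractionRing.injective _ _)
    simpa using hinj (by simpa using this))

/-- The subalgebra `FF V + FF V · τ v₀`. -/
noncomputable def GFalg (V : Finset ι) (v₀ : ι) : Subalgebra (K0 k) (KK k) where
  carrier := {y | ∃ p q : KK k, p ∈ FF k c V ∧ q ∈ FF k c V ∧ y = p + q * τ k c v₀}
  mul_mem' := by
    rintro x y ⟨p, q, hp, hq, rfl⟩ ⟨p', q', hp', hq', rfl⟩
    refine ⟨p * p' + q * q' * ρ k (X - C (c v₀)), p * q' + q * p',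
      add_mem (mul_mem hp hp') (mul_mem (mul_mem hq hq') (ρ_mem k c V _)),
      add_mem (mul_mem hp hq') (mul_mem hq hp'), ?_⟩
    rw [← τ_sq k c v₀]; ring
  one_mem' := ⟨1, 0, one_mem _, zero_mem _, by ring⟩
  add_mem' := by
    rintro x y ⟨p, q, hp, hq, rfl⟩ ⟨p', q', hp', hq', rfl⟩
    exact ⟨p + p', q + q', add_mem hp hp', add_mem hq hq', by ring⟩
  zero_mem' := ⟨0, 0, zero_mem _, zero_mem _, by ring⟩
  algebraMap_mem' := fun u => ⟨algebraMap (K0 k) (KK k) u, 0,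
    (FF k c V).algebraMap_mem u, zero_mem _, by ring⟩

lemma GFalg_inv (V : Finset ι) (v₀ : ι) : ∀ x ∈ GFalg k c V v₀, x⁻¹ ∈ GFalg k c V v₀ := by
  rintro x ⟨p, q, hp, hq, rfl⟩
  by_cases hx : p + q * τ k c v₀ = 0
  · rw [hx, inv_zero]; exact ⟨0, 0, zero_mem _, zero_mem _, by ring⟩
  set e := τ k c v₀ with he
  have he2 : e ^ 2 = ρ k (X - C (c v₀)) := τ_sq k c v₀
  by_cases hN : p ^ 2 - q ^ 2 * e ^ 2 = 0
  · -- p = q e, inverse is e/(2 q e^2)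
    have hfac : (p + q * e) * (p - q * e) = 0 := by rw [← hN]; ring
    have hpe : p = q * e := by
      rcases mul_eq_zero.mp hfac with h | h
      · exact absurd h hx
      · exact sub_eq_zero.mp h
    have hq0 : q ≠ 0 := by
      intro h; apply hx; rw [hpe, h]; ring
    have he2ne : e ^ 2 ≠ 0 := pow_ne_zero _ (e_ne_zero k c v₀)
    have hne : (2 : KK k) * q * e ^ 2 ≠ 0 :=
      mul_ne_zero (mul_ne_zero two_ne_zero hq0) he2ne
    refine ⟨0, ((2 : KK k) * q * ρ k (X - C (c v₀)))⁻¹, zero_mem _, ?_, ?_⟩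
    · exact (FF k c V).inv_mem (mul_mem (mul_mem (by
        simpa using (FF k c V).natCast_mem 2) hq) (ρ_mem k c V _))
    · rw [← he2, ← he]
      apply inv_eq_of_mul_eq_one_right
      have h1 : (p + q * e) * (0 + ((2 : KK k) * q * e ^ 2)⁻¹ * e)
          = (2 * q * e ^ 2) * ((2 : KK k) * q * e ^ 2)⁻¹ := by
        rw [hpe]; field_simp; ring
      rw [h1, mul_inv_cancel₀ hne]
  · have hNmem : p ^ 2 - q ^ 2 * e ^ 2 ∈ FF k c V := by
      rw [he2]
      exact sub_mem (pow_mem hp 2) (mul_mem (pow_mem hq 2) (ρ_mem k c V _))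
    refine ⟨p * (p ^ 2 - q ^ 2 * e ^ 2)⁻¹, -(q * (p ^ 2 - q ^ 2 * e ^ 2)⁻¹),
      mul_mem hp ((FF k c V).inv_mem hNmem), neg_mem (mul_mem hq ((FF k c V).inv_mem hNmem)), ?_⟩
    rw [← he]
    apply inv_eq_of_mul_eq_one_right
    have h1 : (p + q * e) * (p * (p ^ 2 - q ^ 2 * e ^ 2)⁻¹
        + -(q * (p ^ 2 - q ^ 2 * e ^ 2)⁻¹) * e)
        = (p ^ 2 - q ^ 2 * e ^ 2) * (p ^ 2 - q ^ 2 * e ^ 2)⁻¹ := by ring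
    rw [h1, mul_inv_cancel₀ hN]

noncomputable def GF (V : Finset ι) (v₀ : ι) : IntermediateField (K0 k) (KK k) :=
  (GFalg k c V v₀).toIntermediateField (GFalg_inv k c V v₀)

lemma mem_GF {V : Finset ι} {v₀ : ι} {y : KK k} (hy : y ∈ GF k c V v₀) :
    ∃ p q : KK k, p ∈ FF k c V ∧ q ∈ FF k c V ∧ y = p + q * τ k c v₀ := hy

lemma decomp (V : Finset ι) (v₀ : ι) [DecidableEq ι] (y : KK k)
    (hy : y ∈ FF k c (insert v₀ V)) :
    ∃ p q : KK k, p ∈ FF k c V ∧ q ∈ FF k c V ∧ y = p + q * τ k c v₀ := by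
  have hle : FF k c (insert v₀ V) ≤ GF k c V v₀ := by
    rw [FF, adjoin_le_iff, Finset.coe_insert, Set.image_insert_eq]
    rintro x (rfl | ⟨v, hv, rfl⟩)
    · exact ⟨0, 1, zero_mem _, one_mem _, by ring⟩
    · exact ⟨τ k c v, 0, τ_mem k c hv, zero_mem _, by ring⟩
  exact mem_GF k c (hle hy)


lemma FF_empty : FF k c (∅ : Finset ι) = ⊥ := by
  rw [FF, Finset.coe_empty, Set.image_empty, adjoin_empty]

lemma FF_le_insert [DecidableEq ι] (V : Finset ι) (v₀ : ι) :
    FF k c V ≤ FF k c (insert v₀ V) := by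
  rw [FF, FF, adjoin_le_iff]
  rintro x ⟨v, hv, rfl⟩
  exact τ_mem k c (Finset.mem_insert_of_mem hv)

/-- Key lemma: if an element of `k(X)` is a square in `FF V`, then after multiplying by a
product of distinct linear factors indexed by a subset of `V` it is a square in `k(X)`. -/
lemma SQ [DecidableEq ι] (V : Finset ι) : ∀ (u : K0 k) (y : KK k), y ∈ FF k c V →
    y ^ 2 = algebraMap (K0 k) (KK k) u →
    ∃ T ∈ V.powerset, ∃ w : K0 k,
      w ^ 2 = u * algebraMap k[X] (K0 k) (∏ v ∈ T, (X - C (c v))) := by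
  induction V using Finset.induction_on with
  | empty =>
    intro u y hy hy2
    rw [FF_empty k c, IntermediateField.mem_bot] at hy
    obtain ⟨w, rfl⟩ := hy
    refine ⟨∅, Finset.empty_mem_powerset _, w, ?_⟩
    have : algebraMap (K0 k) (KK k) (w ^ 2) = algebraMap (K0 k) (KK k) u := by
      rw [map_pow, hy2]
    simpa using (algebraMap (K0 k) (KK k)).injective this
  | @insert v₀ V hv₀ IH =>
    intro u y hy hy2
    obtain ⟨p, q, hp, hq, rfl⟩ := decomp k c V v₀ y hy
    set e := τ k c v₀ with he
    have he2 : e ^ 2 = ρ k (X - C (c v₀)) := τ_sq k c v₀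
    by_cases hτ : e ∈ FF k c V
    · have hyV : p + q * e ∈ FF k c V := add_mem hp (mul_mem hq hτ)
      obtain ⟨T, hT, w, hw⟩ := IH u _ hyV hy2
      exact ⟨T, Finset.mem_powerset.mpr ((Finset.mem_powerset.mp hT).trans
        (Finset.subset_insert _ _)), w, hw⟩
    · have hab : (p ^ 2 + q ^ 2 * ρ k (X - C (c v₀)) - algebraMap (K0 k) (KK k) u)
          + (2 * (p * q)) * e = 0 := by
        rw [← he2, ← hy2]; ring
      have hamem : p ^ 2 + q ^ 2 * ρ k (X - C (c v₀)) - algebraMap (K0 k) (KK k) u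
          ∈ FF k c V :=
        sub_mem (add_mem (pow_mem hp 2) (mul_mem (pow_mem hq 2) (ρ_mem k c V _)))
          (algebraMap_mem' k c V u)
      have hbmem : (2 : KK k) * (p * q) ∈ FF k c V :=
        mul_mem (by simpa using (FF k c V).natCast_mem 2) (mul_mem hp hq)
      have hb0 : (2 : KK k) * (p * q) = 0 := by
        by_contra hb
        apply hτ
        have h3 : (2 * (p * q)) * e
            = -(p ^ 2 + q ^ 2 * ρ k (X - C (c v₀)) - algebraMap (K0 k) (KK k) u) := by
          linear_combination hab
        have h4 : e = -(p ^ 2 + q ^ 2 * ρ k (X - C (c v₀)) - algebraMap (K0 k) (KK k) u)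
            * ((2 : KK k) * (p * q))⁻¹ := by
          rw [← h3, mul_comm (2 * (p * q)) e, mul_inv_cancel_right₀ hb]
        rw [h4]
        exact mul_mem (neg_mem hamem) ((FF k c V).inv_mem hbmem)
      have ha0 : p ^ 2 + q ^ 2 * ρ k (X - C (c v₀)) = algebraMap (K0 k) (KK k) u := by
        have := hab
        rw [hb0, zero_mul, add_zero, sub_eq_zero] at this
        exact this
      have hpq : p = 0 ∨ q = 0 := by
        rcases mul_eq_zero.mp hb0 with h | h
        · exact absurd h two_ne_zero
        · exact mul_eq_zero.mp h
      rcases hpq with hp0 | hq0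
      · -- p = 0 : u = q^2 (X - c v₀)
        have hd0 : algebraMap k[X] (K0 k) (X - C (c v₀)) ≠ 0 := by
          intro h
          exact X_sub_C_ne_zero (c v₀) (IsFractionRing.injective k[X] (K0 k) (by simpa using h))
        have hq2 : q ^ 2 = algebraMap (K0 k) (KK k)
            (u * (algebraMap k[X] (K0 k) (X - C (c v₀)))⁻¹) := by
          rw [hp0] at ha0
          have hρ : algebraMap (K0 k) (KK k) (algebraMap k[X] (K0 k) (X - C (c v₀)))
              = ρ k (X - C (c v₀)) := rfl
          have hd0' : ρ k (X - C (c v₀)) ≠ 0 := by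
            rw [← hρ]
            simpa using fun h => hd0 ((algebraMap (K0 k) (KK k)).injective (by simpa using h))
          rw [map_mul, map_inv₀, hρ, eq_mul_inv_iff_mul_eq₀ hd0']
          linear_combination ha0
        obtain ⟨T, hT, w, hw⟩ := IH (u * (algebraMap k[X] (K0 k) (X - C (c v₀)))⁻¹) q hq hq2
        have hv₀T : v₀ ∉ T := fun h => hv₀ (Finset.mem_powerset.mp hT h)
        refine ⟨insert v₀ T, Finset.mem_powerset.mpr
          (Finset.insert_subset_insert _ (Finset.mem_powerset.mp hT)), 
          w * algebraMap k[X] (K0 k) (X - C (c v₀)), ?_⟩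
        rw [Finset.prod_insert hv₀T, map_mul, mul_pow, hw]
        linear_combination (u * algebraMap k[X] (K0 k) (∏ v ∈ T, (X - C (c v)))
          * algebraMap k[X] (K0 k) (X - C (c v₀))) * inv_mul_cancel₀ hd0
      · -- q = 0 : u = p^2
        rw [hq0] at ha0
        have : p ^ 2 = algebraMap (K0 k) (KK k) u := by rw [← ha0]; ring
        obtain ⟨T, hT, w, hw⟩ := IH u p hp this
        exact ⟨T, Finset.mem_powerset.mpr ((Finset.mem_powerset.mp hT).trans
          (Finset.subset_insert _ _)), w, hw⟩

lemma tau_notMem [DecidableEq ι] (hc : Function.Injective c) (V : Finset ι) (v₀ : ι)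
    (hv₀ : v₀ ∉ V) : τ k c v₀ ∉ FF k c V := by
  intro hmem
  obtain ⟨T, hT, w, hw⟩ := SQ k c V (algebraMap k[X] (K0 k) (X - C (c v₀))) (τ k c v₀) hmem
    (τ_sq' k c v₀)
  have hv₀T : v₀ ∉ T := fun h => hv₀ (Finset.mem_powerset.mp hT h)
  refine not_square k c hc (insert v₀ T) (Finset.insert_nonempty _ _) w ?_
  rw [Finset.prod_insert hv₀T, map_mul, hw]

lemma lin_indep [DecidableEq ι] (hc : Function.Injective c) (V : Finset ι) :
    ∀ f : Finset ι → K0 k,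
    (∑ T ∈ V.powerset, algebraMap (K0 k) (KK k) (f T) * ∏ v ∈ T, τ k c v) = 0 →
    ∀ T ∈ V.powerset, f T = 0 := by
  induction V using Finset.induction_on with
  | empty =>
    intro f hsum T hT
    rw [Finset.powerset_empty, Finset.sum_singleton, Finset.prod_empty, mul_one] at hsum
    rw [Finset.powerset_empty, Finset.mem_singleton] at hT
    subst hT
    exact (map_eq_zero_iff _ ((algebraMap (K0 k) (KK k)).injective)).mp hsum
  | @insert v₀ V hv₀ IH =>
    intro f hsum T hT
    rw [Finset.sum_powerset_insert hv₀] at hsum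
    have hre : ∀ T ∈ V.powerset, algebraMap (K0 k) (KK k) (f (insert v₀ T)) *
        ∏ v ∈ insert v₀ T, τ k c v
        = (algebraMap (K0 k) (KK k) (f (insert v₀ T)) * ∏ v ∈ T, τ k c v) * τ k c v₀ := by
      intro T hT
      have hvT : v₀ ∉ T := fun h => hv₀ (Finset.mem_powerset.mp hT h)
      rw [Finset.prod_insert hvT]
      ring
    rw [Finset.sum_congr rfl hre, ← Finset.sum_mul] at hsum
    set P := ∑ T ∈ V.powerset, algebraMap (K0 k) (KK k) (f T) * ∏ v ∈ T, τ k c v with hP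
    set Q := ∑ T ∈ V.powerset, algebraMap (K0 k) (KK k) (f (insert v₀ T)) * ∏ v ∈ T, τ k c v
      with hQ
    have hgen : ∀ g : Finset ι → K0 k,
        (∑ T ∈ V.powerset, algebraMap (K0 k) (KK k) (g T) * ∏ v ∈ T, τ k c v) ∈ FF k c V := by
      intro g
      exact sum_mem fun T hT => mul_mem (algebraMap_mem' k c V _)
        (prod_mem fun v hv => τ_mem k c (Finset.mem_powerset.mp hT hv))
    have hQ0 : Q = 0 := by
      by_contra hQne
      apply tau_notMem k c hc V v₀ hv₀
      have h3 : Q * τ k c v₀ = -P := by linear_combination hsum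
      have h4 : τ k c v₀ = -P * Q⁻¹ := by
        rw [← h3, mul_comm Q (τ k c v₀), mul_inv_cancel_right₀ hQne]
      rw [h4]
      exact mul_mem (neg_mem (hgen f)) ((FF k c V).inv_mem (hgen fun T => f (insert v₀ T)))
    have hP0 : P = 0 := by
      rw [hQ0, zero_mul, add_zero] at hsum
      exact hsum
    by_cases hvT : v₀ ∈ T
    · have hTe : T.erase v₀ ∈ V.powerset := Finset.mem_powerset.mpr
        (Finset.subset_insert_iff.mp (Finset.mem_powerset.mp hT))
      have := IH (fun T => f (insert v₀ T)) hQ0 (T.erase v₀) hTe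
      simpa [Finset.insert_erase hvT] using this
    · have hTV : T ∈ V.powerset := Finset.mem_powerset.mpr (by
        intro x hx
        rcases Finset.mem_insert.mp (Finset.mem_powerset.mp hT hx) with h | h
        · exact absurd (h ▸ hx) hvT
        · exact h)
      exact IH f hP0 T hTV

/-- Every multivariate polynomial is, modulo the relation ideal, congruent to a
`R`-linear combination of squarefree monomials. -/
lemma reduce {R : Type} [CommRing R] {ι : Type} [DecidableEq ι] (g : ι → R)
    (p : MvPolynomial ι R) :
    ∃ q ∈ Submodule.span R (Set.range fun T : Finset ι =>
        ∏ v ∈ T, (MvPolynomial.X v : MvPolynomial ι R)),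
      p - q ∈ Ideal.span {h : MvPolynomial ι R |
        ∃ v : ι, h = MvPolynomial.X v ^ 2 - MvPolynomial.C (g v)} := by
  set M := Submodule.span R (Set.range fun T : Finset ι =>
    ∏ v ∈ T, (MvPolynomial.X v : MvPolynomial ι R)) with hM
  set I := Ideal.span {h : MvPolynomial ι R |
    ∃ v : ι, h = MvPolynomial.X v ^ 2 - MvPolynomial.C (g v)} with hI
  have key : ∀ q ∈ M, ∀ v : ι, ∃ q' ∈ M, q * MvPolynomial.X v - q' ∈ I := by
    intro q hq
    induction hq using Submodule.span_induction with
    | mem x hx =>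
      obtain ⟨T, rfl⟩ := hx
      intro v
      by_cases hvT : v ∈ T
      · refine ⟨g v • ∏ u ∈ T.erase v, MvPolynomial.X u,
          Submodule.smul_mem _ _ (Submodule.subset_span ⟨T.erase v, rfl⟩), ?_⟩
        have hTprod : (∏ u ∈ T, (MvPolynomial.X u : MvPolynomial ι R))
            = MvPolynomial.X v * ∏ u ∈ T.erase v, MvPolynomial.X u :=
          (Finset.mul_prod_erase T _ hvT).symm
        have heq : (∏ u ∈ T, (MvPolynomial.X u : MvPolynomial ι R)) * MvPolynomial.X v
            - g v • ∏ u ∈ T.erase v, MvPolynomial.X u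
            = (MvPolynomial.X v ^ 2 - MvPolynomial.C (g v))
              * ∏ u ∈ T.erase v, MvPolynomial.X u := by
          rw [hTprod, MvPolynomial.smul_eq_C_mul]; ring
        rw [heq]
        exact Ideal.mul_mem_right _ _ (Ideal.subset_span ⟨v, rfl⟩)
      · refine ⟨∏ u ∈ insert v T, MvPolynomial.X u,
          Submodule.subset_span ⟨insert v T, rfl⟩, ?_⟩
        rw [Finset.prod_insert hvT]
        have : (∏ u ∈ T, (MvPolynomial.X u : MvPolynomial ι R)) * MvPolynomial.X v
            - MvPolynomial.X v * ∏ u ∈ T, MvPolynomial.X u = 0 := by ring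
        rw [this]
        exact zero_mem _
    | zero => exact fun v => ⟨0, zero_mem _, by simp⟩
    | add x y hx hy ihx ihy =>
      intro v
      obtain ⟨qx, hqx, hx'⟩ := ihx v
      obtain ⟨qy, hqy, hy'⟩ := ihy v
      refine ⟨qx + qy, add_mem hqx hqy, ?_⟩
      have : (x + y) * MvPolynomial.X v - (qx + qy)
          = (x * MvPolynomial.X v - qx) + (y * MvPolynomial.X v - qy) := by ring
      rw [this]
      exact add_mem hx' hy'
    | smul a x hx ihx =>
      intro v
      obtain ⟨qx, hqx, hx'⟩ := ihx v
      refine ⟨a • qx, Submodule.smul_mem _ _ hqx, ?_⟩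
      have : (a • x) * MvPolynomial.X v - a • qx
          = MvPolynomial.C a * (x * MvPolynomial.X v - qx) := by
        rw [MvPolynomial.smul_eq_C_mul, MvPolynomial.smul_eq_C_mul]; ring
      rw [this]
      exact Ideal.mul_mem_left _ _ hx'
  induction p using MvPolynomial.induction_on with
  | C a =>
    refine ⟨MvPolynomial.C a, ?_, by simp⟩
    have : (MvPolynomial.C a : MvPolynomial ι R)
        = a • ∏ v ∈ (∅ : Finset ι), MvPolynomial.X v := by
      rw [Finset.prod_empty, MvPolynomial.smul_eq_C_mul, mul_one]
    rw [this]
    exact Submodule.smul_mem _ _ (Submodule.subset_span ⟨∅, rfl⟩)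
  | add p p' ihp ihp' =>
    obtain ⟨q, hq, hpq⟩ := ihp
    obtain ⟨q', hq', hpq'⟩ := ihp'
    refine ⟨q + q', add_mem hq hq', ?_⟩
    have : p + p' - (q + q') = (p - q) + (p' - q') := by ring
    rw [this]
    exact add_mem hpq hpq'
  | mul_X p v ihp =>
    obtain ⟨q, hq, hpq⟩ := ihp
    obtain ⟨q', hq', hqq'⟩ := key q hq v
    refine ⟨q', hq', ?_⟩
    have : p * MvPolynomial.X v - q'
        = (p - q) * MvPolynomial.X v + (q * MvPolynomial.X v - q') := by ring
    rw [this]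
    exact add_mem (Ideal.mul_mem_right _ _ hpq) hqq'

end BringAux

set_option maxHeartbeats 1000000 in
/-- If every multiplicity `n_i` is odd, then `B` is an integral domain. -/
theorem Bring_isDomain_of_odd
    (k : Type) [Field k] [CharZero k] [IsAlgClosed k] (r : ℕ) (α : Fin r → k) (n : Fin r → ℕ)
    (hn : ∀ i, 0 < n i)
    (hα : ∀ i j : Fin r, ∀ t : ℤ, α i = α j + (t : k) → i = j)
    (hodd : ∀ i, Odd (n i)) :
    IsDomain (Bring k r α n) := by
  classical
  set c : Fin r × ℤ → k := fun v => α v.1 + (v.2 : k) with hcdef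
  have hc : Function.Injective c := by
    rintro ⟨i, si⟩ ⟨j, t⟩ h
    simp only [hcdef] at h
    have hij : i = j := hα i j (t - si) (by push_cast; linear_combination h)
    subst hij
    have hst : (si : k) = (t : k) := by linear_combination h
    have : si = t := Int.cast_injective hst
    subst this
    rfl
  set m : Fin r → ℕ := fun i => n i / 2 with hmdef
  have hm : ∀ i, n i = 2 * m i + 1 := by
    intro i
    have h1 := Nat.odd_iff.mp (hodd i)
    simp only [hmdef]
    omega
  set sVal : Fin r × ℤ → BringAux.KK k := fun v =>
    BringAux.ρ k ((X - C (c v)) ^ m v.1) * BringAux.τ k c v with hsdef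
  set φ : MvPolynomial (Fin r × ℤ) k[X] →+* BringAux.KK k :=
    MvPolynomial.eval₂Hom (BringAux.ρ k) sVal with hφdef
  have hsq : ∀ v : Fin r × ℤ, sVal v ^ 2 = BringAux.ρ k (Bgen k α n v.1 v.2) := by
    intro v
    have hBg : Bgen k α n v.1 v.2 = ((X - C (c v)) ^ m v.1) ^ 2 * (X - C (c v)) := by
      rw [Bgen, ← pow_mul, ← pow_succ, hcdef]
      rw [hm v.1]
      ring_nf
    rw [hsdef]
    simp only []
    rw [mul_pow, BringAux.τ_sq k c v, ← map_pow, ← map_mul, hBg]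
  have hker1 : Brel k r α n ≤ RingHom.ker φ := by
    rw [Brel, Ideal.span_le]
    rintro x ⟨i, j, rfl⟩
    rw [SetLike.mem_coe, RingHom.mem_ker, map_sub, map_pow, hφdef]
    rw [MvPolynomial.eval₂Hom_X', MvPolynomial.eval₂Hom_C]
    exact sub_eq_zero.mpr (hsq (i, j))
  have hIeq : Ideal.span {h : MvPolynomial (Fin r × ℤ) k[X] |
      ∃ v : Fin r × ℤ, h = MvPolynomial.X v ^ 2 - MvPolynomial.C (Bgen k α n v.1 v.2)}
      = Brel k r α n := by
    rw [Brel]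
    congr 1
    ext x
    constructor
    · rintro ⟨v, rfl⟩; exact ⟨v.1, v.2, rfl⟩
    · rintro ⟨i, j, rfl⟩; exact ⟨(i, j), rfl⟩
  have hker2 : RingHom.ker φ ≤ Brel k r α n := by
    intro p hp
    rw [RingHom.mem_ker] at hp
    obtain ⟨q, hqM, hpq⟩ := BringAux.reduce (fun v : Fin r × ℤ => Bgen k α n v.1 v.2) p
    rw [hIeq] at hpq
    have hφpq : φ (p - q) = 0 := hker1 hpq
    have hφq : φ q = 0 := by
      have h2 : φ q = φ p - φ (p - q) := by rw [map_sub]; ring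
      rw [h2, hp, hφpq, sub_zero]
    rw [Finsupp.mem_span_range_iff_exists_finsupp] at hqM
    obtain ⟨f, hf⟩ := hqM
    have hφsum : φ q = ∑ T ∈ f.support,
        BringAux.ρ k (f T * ∏ v ∈ T, (X - C (c v)) ^ m v.1)
        * ∏ v ∈ T, BringAux.τ k c v := by
      rw [← hf, Finsupp.sum, map_sum]
      refine Finset.sum_congr rfl fun T hT => ?_
      rw [MvPolynomial.smul_eq_C_mul, map_mul, hφdef, MvPolynomial.eval₂Hom_C, map_prod]
      simp only [MvPolynomial.eval₂Hom_X']
      rw [hsdef]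
      simp only []
      rw [Finset.prod_mul_distrib, ← map_prod, map_mul]
      ring
    set V : Finset (Fin r × ℤ) := f.support.sup id with hV
    have hsub : f.support ⊆ V.powerset := fun T hT =>
      Finset.mem_powerset.mpr (Finset.le_sup (f := id) hT)
    set F : Finset (Fin r × ℤ) → BringAux.K0 k := fun T =>
      algebraMap k[X] (BringAux.K0 k) (f T * ∏ v ∈ T, (X - C (c v)) ^ m v.1) with hF
    have hterm : ∀ T, algebraMap (BringAux.K0 k) (BringAux.KK k) (F T)
        = BringAux.ρ k (f T * ∏ v ∈ T, (X - C (c v)) ^ m v.1) := fun T => rfl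
    have hzero : ∀ T ∈ V.powerset, T ∉ f.support →
        algebraMap (BringAux.K0 k) (BringAux.KK k) (F T)
          * ∏ v ∈ T, BringAux.τ k c v = 0 := by
      intro T _ hT
      rw [hF]
      simp only []
      rw [Finsupp.notMem_support_iff.mp hT]
      simp
    have hsum0 : (∑ T ∈ V.powerset, algebraMap (BringAux.K0 k) (BringAux.KK k) (F T)
        * ∏ v ∈ T, BringAux.τ k c v) = 0 := by
      rw [← Finset.sum_subset hsub hzero, ← hφq, hφsum]
      exact Finset.sum_congr rfl fun T _ => by rw [hterm]
    have hFzero := BringAux.lin_indep k c hc V F hsum0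
    have hf0 : ∀ T, f T = 0 := by
      intro T
      by_cases hTs : T ∈ f.support
      · have hFT := hFzero T (hsub hTs)
        have h1 : f T * ∏ v ∈ T, (X - C (c v)) ^ m v.1 = 0 :=
          IsFractionRing.injective k[X] (BringAux.K0 k) (by
            rw [hF] at hFT
            simpa using hFT)
        have h2 : (∏ v ∈ T, ((X : k[X]) - C (c v)) ^ m v.1) ≠ 0 :=
          Finset.prod_ne_zero_iff.mpr fun v _ => pow_ne_zero _ (X_sub_C_ne_zero (c v))
        rcases mul_eq_zero.mp h1 with h | h
        · exact h
        · exact absurd h h2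
      · exact Finsupp.notMem_support_iff.mp hTs
    have hq0 : q = 0 := by
      rw [← hf, Finsupp.sum]
      exact Finset.sum_eq_zero fun T _ => by rw [hf0 T, zero_smul]
    simpa [hq0] using hpq
  have hBK : Brel k r α n = RingHom.ker φ := le_antisymm hker1 hker2
  rw [Ideal.Quotient.isDomain_iff_prime, hBK]
  exact RingHom.ker_isPrime φ
end

section
/- Let I ⊆ [1,r] be the set of indices i with n_i even, and suppose I ≠ ∅. Then an ideal of B is a minimal prime if and only if it has the form p = (b_{i,j} − (−1)^{ε_{i,j}} σ^{−j}((z−α_i)^{n_i/2}) : i ∈ I, j ∈ ℤ) for some choice of signs ε_{i,j} ∈ {0,1}. -/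
/- The commutative ring `B = R[b_{i,j} : i in [1,r], j in Z]/(b_{i,j}^2 - sigma^{-j}((z-a_i)^{n_i}))`
with `R = k[z]`, `sigma(z) = z + 1` (so `sigma^{-j}((z-a_i)^{n_i}) = (z - (a_i + j))^{n_i}`). -/

open Polynomial

/-!
For `n_i` even put `h_{i,j} = σ^{-j}((z - α_i)^{n_i/2})`; then
`(b_{i,j} - h_{i,j})(b_{i,j} + h_{i,j}) = 0`, so every prime contains one factor for each such
`(i, j)`, i.e. contains some `p_ε`. Since `b - h` and `b + h` never both lie in `p_ε` (their
difference is `2h ≠ 0`), `p_ε ⊆ p_ε'` forces `ε = ε'` on these indices, and the minimal primes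
are exactly the `p_ε` once these are prime.

`p_ε` is the kernel of the evaluation of `B` in an algebraic closure of `k(z)` sending `b_{i,j}` to
`±h_{i,j}` for `n_i` even and to a square root of `σ^{-j}((z - α_i)^{n_i})` for `n_i` odd: modulo
`p_ε` every element is a `k[z]`-combination of squarefree monomials in the odd-index generators,
and their images are linearly independent over `k(z)` because no nonempty product of the odd
`σ^{-j}((z - α_i)^{n_i})` is a square (the roots `α_i + j` are pairwise distinct).
-/

section Kummer

variable {K Ω ι : Type*} [Field K] [Field Ω] [Algebra K Ω] {f : ι → K} {σ : ι → Ω}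

theorem exists_add_mul_of_mem_adjoin_insert {u : ι} {E : Set ι}
    (hu : σ u ^ 2 ∈ Algebra.adjoin K (σ '' E)) {x : Ω}
    (hx : x ∈ Algebra.adjoin K (σ '' insert u E)) :
    ∃ y ∈ Algebra.adjoin K (σ '' E), ∃ z ∈ Algebra.adjoin K (σ '' E),
      x = y + z * σ u := by
  set A := Algebra.adjoin K (σ '' E)
  induction hx using Algebra.adjoin_induction with
  | mem w hw =>
    obtain ⟨i, rfl | hi, rfl⟩ := hw
    · exact ⟨0, A.zero_mem, 1, A.one_mem, by ring⟩
    · exact ⟨σ i, Algebra.subset_adjoin ⟨i, hi, rfl⟩, 0, A.zero_mem, by ring⟩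
  | algebraMap c => exact ⟨algebraMap K Ω c, A.algebraMap_mem c, 0, A.zero_mem, by ring⟩
  | add _ _ _ _ ihx ihy =>
    obtain ⟨a, ha, b, hb, rfl⟩ := ihx
    obtain ⟨c, hc, d, hd, rfl⟩ := ihy
    exact ⟨a + c, A.add_mem ha hc, b + d, A.add_mem hb hd, by ring⟩
  | mul _ _ _ _ ihx ihy =>
    obtain ⟨a, ha, b, hb, rfl⟩ := ihx
    obtain ⟨c, hc, d, hd, rfl⟩ := ihy
    exact ⟨a * c + b * d * σ u ^ 2, A.add_mem (A.mul_mem ha hc) (A.mul_mem (A.mul_mem hb hd) hu),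
      a * d + b * c, A.add_mem (A.mul_mem ha hd) (A.mul_mem hb hc), by ring⟩

variable (hσ : ∀ i, σ i ^ 2 = algebraMap K Ω (f i))
include hσ

theorem inv_mem_adjoin_of_sq_eq {E : Set ι} {w : Ω} (hw : w ∈ Algebra.adjoin K (σ '' E)) :
    w⁻¹ ∈ Algebra.adjoin K (σ '' E) := by
  have : Algebra.IsIntegral K (Algebra.adjoin K (σ '' E)) := Algebra.IsIntegral.adjoin <| by
    rintro _ ⟨i, -, rfl⟩
    exact IsIntegral.of_pow two_pos (hσ i ▸ isIntegral_algebraMap)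
  exact Algebra.IsIntegral.inv_mem hw

theorem mul_eq_zero_of_sq_add_mul_mem [NeZero (2 : Ω)] {u : ι} {E : Set ι}
    (hu : σ u ∉ Algebra.adjoin K (σ '' E)) {y z : Ω} (hy : y ∈ Algebra.adjoin K (σ '' E))
    (hz : z ∈ Algebra.adjoin K (σ '' E))
    (h : (y + z * σ u) ^ 2 ∈ Algebra.adjoin K (σ '' E)) :
    y * z = 0 := by
  set A := Algebra.adjoin K (σ '' E)
  by_contra hyz
  have h2yz : 2 * (y * z) ≠ 0 := mul_ne_zero two_ne_zero hyz
  refine hu ?_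
  have hσu : σ u =
      ((y + z * σ u) ^ 2 - y ^ 2 - z ^ 2 * algebraMap K Ω (f u)) * (2 * (y * z))⁻¹ := by
    rw [eq_mul_inv_iff_mul_eq₀ h2yz, ← hσ u]
    ring
  rw [hσu]
  refine A.mul_mem (A.sub_mem (A.sub_mem h (A.pow_mem hy 2))
    (A.mul_mem (A.pow_mem hz 2) (A.algebraMap_mem _))) (inv_mem_adjoin_of_sq_eq hσ ?_)
  exact A.mul_mem (by simp) (A.mul_mem hy hz)

variable [NeZero (2 : Ω)] (hf : ∀ S : Finset ι, S.Nonempty → ¬IsSquare (∏ s ∈ S, f s))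
include hf

theorem sq_ne_algebraMap_prod_of_mem_adjoin (E : Finset ι) :
    ∀ S : Finset ι, S.Nonempty → Disjoint S E →
      ∀ x ∈ Algebra.adjoin K (σ '' E), x ^ 2 ≠ algebraMap K Ω (∏ s ∈ S, f s) := by
  classical
  induction E using Finset.induction_on with
  | empty =>
    intro S hS _ x hx hsq
    rw [Finset.coe_empty, Set.image_empty, Algebra.adjoin_empty, Algebra.mem_bot] at hx
    obtain ⟨y, rfl⟩ := hx
    exact hf S hS ⟨y, (algebraMap K Ω).injective (by rw [map_mul, ← sq, hsq])⟩
  | insert u E hu ih =>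
    intro S hS hdisj x hx hsq
    rw [Finset.disjoint_insert_right] at hdisj
    have hσu : σ u ∉ Algebra.adjoin K (σ '' E) := fun h =>
      ih {u} (Finset.singleton_nonempty u) (Finset.disjoint_singleton_left.mpr hu) (σ u) h
        (by rw [Finset.prod_singleton, hσ u])
    rw [Finset.coe_insert] at hx
    obtain ⟨y, hy, z, hz, rfl⟩ := exists_add_mul_of_mem_adjoin_insert
      (by rw [hσ u]; exact Subalgebra.algebraMap_mem _ _) hx
    rcases mul_eq_zero.mp (mul_eq_zero_of_sq_add_mul_mem hσ hσu hy hz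
      (by rw [hsq]; exact Subalgebra.algebraMap_mem _ _)) with rfl | rfl
    · -- `(z σ_u)² = ∏_S f` makes `(z f_u)²` the product over `insert u S`
      refine ih (insert u S) (Finset.insert_nonempty u S)
        (Finset.disjoint_insert_left.mpr ⟨hu, hdisj.2⟩) (z * algebraMap K Ω (f u))
        (Subalgebra.mul_mem _ hz (Subalgebra.algebraMap_mem _ _)) ?_
      rw [Finset.prod_insert hdisj.1, map_mul, ← hsq, ← hσ u]
      ring
    · exact ih S hS hdisj.2 y hy (by rw [← hsq]; ring)

theorem eq_zero_of_sum_powerset_smul_prod_eq_zero (E : Finset ι) :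
    ∀ a : Finset ι → K, ∑ S ∈ E.powerset, a S • ∏ s ∈ S, σ s = 0 →
      ∀ S ∈ E.powerset, a S = 0 := by
  classical
  induction E using Finset.induction_on with
  | empty => simp
  | insert u E hu ih =>
    intro a hsum
    set A := Algebra.adjoin K (σ '' E)
    set P := ∑ S ∈ E.powerset, a S • ∏ s ∈ S, σ s
    set Q := ∑ S ∈ E.powerset, a (insert u S) • ∏ s ∈ S, σ s
    have hPQ : P + σ u * Q = 0 := by
      rw [← hsum, Finset.sum_powerset_insert hu, Finset.mul_sum]
      congr 1
      refine Finset.sum_congr rfl fun T hT => ?_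
      rw [Finset.prod_insert fun h => hu (Finset.mem_powerset.mp hT h), mul_smul_comm]
    have hmem : ∀ b : Finset ι → K, ∑ S ∈ E.powerset, b S • ∏ s ∈ S, σ s ∈ A :=
      fun b => A.sum_mem fun T hT => A.smul_mem (A.prod_mem fun s hs =>
        Algebra.subset_adjoin ⟨s, Finset.mem_powerset.mp hT hs, rfl⟩) _
    have hQ : Q = 0 := by
      by_contra hQ
      refine sq_ne_algebraMap_prod_of_mem_adjoin hσ hf E {u} (Finset.singleton_nonempty u)
        (Finset.disjoint_singleton_left.mpr hu) (σ u) ?_ (by rw [Finset.prod_singleton, hσ u])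
      have : σ u = -P * Q⁻¹ := by
        rw [eq_mul_inv_iff_mul_eq₀ hQ]
        linear_combination hPQ
      rw [this]
      exact A.mul_mem (A.neg_mem (hmem a)) (inv_mem_adjoin_of_sq_eq hσ (hmem _))
    have hP : P = 0 := by rwa [hQ, mul_zero, add_zero] at hPQ
    intro S hS
    rw [Finset.mem_powerset, Finset.subset_insert_iff] at hS
    by_cases huS : u ∈ S
    · rw [← Finset.insert_erase huS]
      exact ih (fun T => a (insert u T)) hQ _ (Finset.mem_powerset.mpr hS)
    · rw [Finset.erase_eq_of_notMem huS] at hS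
      exact ih a hP S (Finset.mem_powerset.mpr hS)

theorem linearIndependent_prod_of_not_isSquare :
    LinearIndependent K fun S : Finset ι => ∏ s ∈ S, σ s := by
  classical
  rw [linearIndependent_iff]
  intro l hl
  ext S
  by_contra hS
  set E := l.support.sup id
  have hsub : l.support ⊆ E.powerset := fun T hT =>
    Finset.mem_powerset.mpr (Finset.le_sup (f := id) hT)
  refine hS (eq_zero_of_sum_powerset_smul_prod_eq_zero hσ hf E l ?_ S
    (hsub (Finsupp.mem_support_iff.mpr hS)))
  rw [← hl, Finsupp.linearCombination_apply, Finsupp.sum, Finset.sum_subset hsub]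
  intro T _ hT
  rw [Finsupp.notMem_support_iff.mp hT, zero_smul]

end Kummer

theorem Polynomial.not_isSquare_algebraMap_of_odd_rootMultiplicity {R K : Type*} [CommRing R]
    [IsDomain R] [Field K] [Algebra R[X] K] [IsFractionRing R[X] K] {g : R[X]} {c : R}
    (h : Odd (g.rootMultiplicity c)) : ¬IsSquare (algebraMap R[X] K g) := by
  rintro ⟨x, hx⟩
  obtain ⟨p, q, hq, rfl⟩ := IsFractionRing.div_surjective R[X] x
  have hq0 : q ≠ 0 := nonZeroDivisors.ne_zero hq
  have hg0 : g ≠ 0 := by rintro rfl; simp at h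
  have key : g * (q * q) = p * p := IsFractionRing.injective R[X] K <| by
    have : algebraMap R[X] K q ≠ 0 := IsFractionRing.to_map_ne_zero_of_mem_nonZeroDivisors hq
    rw [map_mul, map_mul, map_mul, hx]
    field_simp
  have hp0 : p ≠ 0 := by
    rintro rfl
    simp [hg0, hq0] at key
  have := congrArg (rootMultiplicity c) key
  rw [rootMultiplicity_mul (by simp [hg0, hq0]), rootMultiplicity_mul (by simp [hq0]),
    rootMultiplicity_mul (by simp [hp0])] at this
  obtain ⟨t, ht⟩ := h
  omega

theorem Polynomial.rootMultiplicity_prod_X_sub_C_pow {R ι : Type*} [CommRing R] [IsDomain R]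
    {S : Finset ι} {a : ι → R} (ha : Set.InjOn a S) (m : ι → ℕ) {i : ι} (hi : i ∈ S) :
    (∏ t ∈ S, (X - C (a t)) ^ m t).rootMultiplicity (a i) = m i := by
  classical
  rw [← Finset.prod_erase_mul _ _ hi, rootMultiplicity_mul_X_sub_C_pow
    (Finset.prod_ne_zero_iff.mpr fun t _ => pow_ne_zero _ (X_sub_C_ne_zero _)),
    rootMultiplicity_eq_zero, zero_add]
  rw [IsRoot, eval_prod, Finset.prod_eq_zero_iff]
  rintro ⟨t, ht, hroot⟩
  rw [eval_pow, eval_sub, eval_X, eval_C, pow_eq_zero_iff', sub_eq_zero] at hroot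
  exact Finset.ne_of_mem_erase ht (ha hi (Finset.mem_of_mem_erase ht) hroot.1).symm

theorem LinearMap.ker_eq_of_sup_span_eq_top {R M M' ι : Type*} [Ring R] [AddCommGroup M]
    [AddCommGroup M'] [Module R M] [Module R M'] {f : M →ₗ[R] M'} {N : Submodule R M}
    {v : ι → M} (htop : N ⊔ Submodule.span R (Set.range v) = ⊤) (hN : N ≤ LinearMap.ker f)
    (hv : LinearIndependent R (f ∘ v)) : LinearMap.ker f = N := by
  refine le_antisymm (fun x hx => ?_) hN
  obtain ⟨y, hy, m, hm, rfl⟩ :=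
    Submodule.mem_sup.mp (htop ▸ Submodule.mem_top : x ∈ N ⊔ _)
  have hmker : m ∈ LinearMap.ker f := by
    rw [LinearMap.mem_ker, map_add, hN hy, zero_add] at hx
    exact hx
  rw [Submodule.disjoint_def.mp (Submodule.range_ker_disjoint hv) m hm hmker, add_zero]
  exact hy

section SquarefreeMonomials

variable {R A ι : Type*} [CommRing R] [CommRing A] [Algebra R A] {b : ι → A} {p : ι → Prop}
  {f c : ι → R} {I : Ideal A}

variable (R b p) in
def squarefreeSpan : Submodule R A :=
  Submodule.span R (Set.range fun S : Finset {s // p s} => ∏ t ∈ S, b t)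

variable (hb : ∀ s, p s → b s ^ 2 = algebraMap R A (f s))
  (hI : ∀ s, ¬p s → b s - algebraMap R A (c s) ∈ I)
include hb hI

theorem prod_mul_mem_sup_squarefreeSpan (S : Finset {s // p s}) (s : ι) :
    (∏ t ∈ S, b t) * b s ∈ I.restrictScalars R ⊔ squarefreeSpan R b p := by
  classical
  by_cases hs : p s
  · refine Submodule.mem_sup_right ?_
    by_cases ht : ⟨s, hs⟩ ∈ S
    · have : (∏ t ∈ S, b t) * b s = f s • ∏ t ∈ S.erase ⟨s, hs⟩, b t := by
        rw [← Finset.mul_prod_erase S _ ht, Algebra.smul_def, ← hb s hs]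
        ring
      rw [this]
      exact Submodule.smul_mem _ _ (Submodule.subset_span ⟨_, rfl⟩)
    · have : (∏ t ∈ S, b t) * b s = ∏ t ∈ insert ⟨s, hs⟩ S, b t := by
        rw [Finset.prod_insert ht, mul_comm]
      rw [this]
      exact Submodule.subset_span ⟨_, rfl⟩
  · have : (∏ t ∈ S, b t) * b s =
        (∏ t ∈ S, b t) * (b s - algebraMap R A (c s)) + c s • ∏ t ∈ S, b t := by
      rw [Algebra.smul_def]; ring
    rw [this]
    exact add_mem (Submodule.mem_sup_left (I.mul_mem_left _ (hI s hs)))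
      (Submodule.mem_sup_right (Submodule.smul_mem _ _ (Submodule.subset_span ⟨S, rfl⟩)))

theorem mul_mem_sup_squarefreeSpan {x : A}
    (hx : x ∈ I.restrictScalars R ⊔ squarefreeSpan R b p) (s : ι) :
    x * b s ∈ I.restrictScalars R ⊔ squarefreeSpan R b p := by
  obtain ⟨y, hy, m, hm, rfl⟩ := Submodule.mem_sup.mp hx
  clear hx
  rw [add_mul]
  refine add_mem (Submodule.mem_sup_left (I.mul_mem_right _ hy)) ?_
  induction hm using Submodule.span_induction with
  | mem _ hm =>
    obtain ⟨S, rfl⟩ := hm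
    exact prod_mul_mem_sup_squarefreeSpan hb hI S s
  | zero => rw [zero_mul]; exact zero_mem _
  | add _ _ _ _ h₁ h₂ => rw [add_mul]; exact add_mem h₁ h₂
  | smul a _ _ h => rw [smul_mul_assoc]; exact Submodule.smul_mem _ a h

theorem sup_squarefreeSpan_eq_top (hgen : Function.Surjective (MvPolynomial.aeval (R := R) b)) :
    I.restrictScalars R ⊔ squarefreeSpan R b p = ⊤ := by
  refine Submodule.eq_top_iff'.mpr fun x => ?_
  obtain ⟨a, rfl⟩ := hgen x
  induction a using MvPolynomial.induction_on with
  | C a =>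
    rw [MvPolynomial.aeval_C, Algebra.algebraMap_eq_smul_one, ← Finset.prod_empty (f := b)]
    exact Submodule.mem_sup_right (Submodule.smul_mem _ a (Submodule.subset_span ⟨∅, rfl⟩))
  | add _ _ h₁ h₂ => rw [map_add]; exact add_mem h₁ h₂
  | mul_X a s h =>
    rw [map_mul, MvPolynomial.aeval_X]
    exact mul_mem_sup_squarefreeSpan hb hI h s

end SquarefreeMonomials

section MinimalPrimes

variable {A ι : Type*} [CommRing A] (g : ι → Bool → A) (p : ι → Prop)

def signChoiceIdeal (ε : ι → Bool) : Ideal A := Ideal.span {x | ∃ s, p s ∧ x = g s (ε s)}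

variable {g p}

theorem exists_signChoiceIdeal_le (hg : ∀ s, p s → g s true * g s false = 0) {q : Ideal A}
    (hq : q.IsPrime) : ∃ ε, signChoiceIdeal g p ε ≤ q := by
  classical
  refine ⟨fun s => decide (g s true ∈ q), Ideal.span_le.mpr ?_⟩
  rintro _ ⟨s, hs, rfl⟩
  by_cases h : g s true ∈ q
  · simp [h]
  · simpa [h] using (hq.mem_or_mem (hg s hs ▸ q.zero_mem)).resolve_left h

theorem signChoiceIdeal_le_signChoiceIdeal_iff
    (hsep : ∀ ε s, p s → g s (!ε s) ∉ signChoiceIdeal g p ε) {ε ε' : ι → Bool} :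
    signChoiceIdeal g p ε' ≤ signChoiceIdeal g p ε ↔ ∀ s, p s → ε' s = ε s := by
  refine ⟨fun h s hs => ?_, fun h => Ideal.span_mono ?_⟩
  · by_contra hne
    refine hsep ε s hs (h (Ideal.subset_span ⟨s, hs, ?_⟩))
    rw [Bool.eq_not.mpr hne]
  · rintro _ ⟨s, hs, rfl⟩
    exact ⟨s, hs, by rw [h s hs]⟩

theorem mem_minimalPrimes_iff_exists_eq_signChoiceIdeal
    (hg : ∀ s, p s → g s true * g s false = 0)
    (hprime : ∀ ε, (signChoiceIdeal g p ε).IsPrime)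
    (hsep : ∀ ε s, p s → g s (!ε s) ∉ signChoiceIdeal g p ε) (P : Ideal A) :
    P ∈ minimalPrimes A ↔ ∃ ε, P = signChoiceIdeal g p ε := by
  constructor
  · rintro ⟨⟨hP, -⟩, hmin⟩
    obtain ⟨ε, hle⟩ := exists_signChoiceIdeal_le hg hP
    exact ⟨ε, le_antisymm (hmin ⟨hprime ε, bot_le⟩ hle) hle⟩
  · rintro ⟨ε, rfl⟩
    refine ⟨⟨hprime ε, bot_le⟩, ?_⟩
    rintro q ⟨hq, -⟩ hqle
    obtain ⟨ε', hle'⟩ := exists_signChoiceIdeal_le hg hq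
    have hεε' := (signChoiceIdeal_le_signChoiceIdeal_iff hsep).mp (hle'.trans hqle)
    exact ((signChoiceIdeal_le_signChoiceIdeal_iff hsep).mpr fun s hs => (hεε' s hs).symm).trans
      hle'

end MinimalPrimes

namespace Bring

variable {k : Type} [Field k] {r : ℕ} (α : Fin r → k) (n : Fin r → ℕ)

local notation "π" => Ideal.Quotient.mk (Brel k r α n)

noncomputable def halfGen (s : Fin r × ℤ) : k[X] := (X - C (α s.1 + (s.2 : k))) ^ (n s.1 / 2)

noncomputable def signedGen (s : Fin r × ℤ) (e : Bool) : Bring k r α n :=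
  π (MvPolynomial.X s) - (if e then -1 else 1) * π (MvPolynomial.C (halfGen α n s))

variable {α n}

theorem halfGen_sq {s : Fin r × ℤ} (hs : Even (n s.1)) :
    halfGen α n s ^ 2 = Bgen k α n s.1 s.2 := by
  rw [halfGen, Bgen, ← pow_mul, Nat.div_mul_cancel hs.two_dvd]

theorem halfGen_ne_zero (s : Fin r × ℤ) : halfGen α n s ≠ 0 :=
  pow_ne_zero _ (X_sub_C_ne_zero _)

theorem mk_C (a : k[X]) : π (MvPolynomial.C a) = algebraMap k[X] (Bring k r α n) a := rfl

theorem mk_X_sq (s : Fin r × ℤ) :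
    π (MvPolynomial.X s) ^ 2 = algebraMap k[X] (Bring k r α n) (Bgen k α n s.1 s.2) := by
  rw [← Ideal.Quotient.mk_algebraMap, MvPolynomial.algebraMap_eq, ← sub_eq_zero, ← map_pow,
    ← map_sub, Ideal.Quotient.eq_zero_iff_mem]
  exact Ideal.subset_span ⟨s.1, s.2, rfl⟩

theorem signedGen_eq (s : Fin r × ℤ) (e : Bool) :
    signedGen α n s e =
      π (MvPolynomial.X s) - algebraMap k[X] _ ((if e then -1 else 1) * halfGen α n s) := by
  rw [signedGen, mk_C]
  split_ifs <;> simp only [map_mul, map_neg, map_one]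

theorem signedGen_true_mul_signedGen_false {s : Fin r × ℤ} (hs : Even (n s.1)) :
    signedGen α n s true * signedGen α n s false = 0 := by
  have hh : algebraMap k[X] (Bring k r α n) (halfGen α n s) ^ 2 =
      algebraMap k[X] _ (Bgen k α n s.1 s.2) := by
    rw [← map_pow, halfGen_sq hs]
  simp only [signedGen, mk_C, if_true, Bool.false_eq_true, if_false]
  linear_combination mk_X_sq (α := α) (n := n) s - hh

theorem aeval_mk_X_surjective :
    Function.Surjective (MvPolynomial.aeval (R := k[X]) fun s => π (MvPolynomial.X s)) := by
  rw [show MvPolynomial.aeval (fun s => π (MvPolynomial.X s)) =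
    Ideal.Quotient.mkₐ k[X] (Brel k r α n) from MvPolynomial.algHom_ext fun s => by simp]
  exact Ideal.Quotient.mkₐ_surjective _ _

section Evaluation

variable {Ω : Type*} [CommRing Ω] [Algebra k[X] Ω] (ε : Fin r × ℤ → Bool)
  (ρ : Fin r × ℤ → Ω)

variable (α n) in
noncomputable def signedValue (s : Fin r × ℤ) : Ω :=
  if Even (n s.1) then algebraMap k[X] Ω ((if ε s then -1 else 1) * halfGen α n s) else ρ s

variable (hρ : ∀ s, ρ s ^ 2 = algebraMap k[X] Ω (Bgen k α n s.1 s.2))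
include hρ

theorem aeval_signedValue_eq_zero_of_mem_Brel :
    ∀ a ∈ Brel k r α n, MvPolynomial.aeval (signedValue α n ε ρ) a = 0 := by
  intro a ha
  refine Submodule.span_induction ?_ (map_zero _)
    (fun _ _ _ _ hx hy => by rw [map_add, hx, hy, add_zero])
    (fun b _ _ hx => by rw [smul_eq_mul, map_mul, hx, mul_zero]) ha
  rintro _ ⟨i, j, rfl⟩
  rw [map_sub, map_pow, MvPolynomial.aeval_X, MvPolynomial.aeval_C, signedValue, sub_eq_zero]
  by_cases hs : Even (n i)
  · rw [if_pos hs, ← map_pow, mul_pow, halfGen_sq hs]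
    split_ifs <;> simp
  · exact (if_neg hs).symm ▸ hρ (i, j)

variable (α n) in
noncomputable def signedEval : Bring k r α n →ₐ[k[X]] Ω :=
  Ideal.Quotient.liftₐ _ (MvPolynomial.aeval (signedValue α n ε ρ))
    (aeval_signedValue_eq_zero_of_mem_Brel ε ρ hρ)

theorem signedEval_mk_X (s : Fin r × ℤ) :
    signedEval α n ε ρ hρ (π (MvPolynomial.X s)) = signedValue α n ε ρ s :=
  MvPolynomial.aeval_X _ _

theorem signedEval_signedGen {s : Fin r × ℤ} (hs : Even (n s.1)) (e : Bool) :
    signedEval α n ε ρ hρ (signedGen α n s e) =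
      algebraMap k[X] Ω (((if ε s then -1 else 1) - (if e then -1 else 1)) * halfGen α n s) := by
  rw [signedGen_eq, map_sub, AlgHom.commutes, signedEval_mk_X, signedValue, if_pos hs, ← map_sub,
    sub_mul]

theorem signChoiceIdeal_le_ker_signedEval :
    signChoiceIdeal (signedGen α n) (fun s => Even (n s.1)) ε ≤
      RingHom.ker (signedEval α n ε ρ hρ) := by
  rw [signChoiceIdeal, Ideal.span_le]
  rintro _ ⟨s, hs, rfl⟩
  rw [SetLike.mem_coe, RingHom.mem_ker, signedEval_signedGen ε ρ hρ hs, sub_self, zero_mul,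
    map_zero]

end Evaluation

theorem exists_sq_eq_Bgen : ∃ ρ : Fin r × ℤ → AlgebraicClosure (RatFunc k),
    ∀ s, ρ s ^ 2 = algebraMap k[X] _ (Bgen k α n s.1 s.2) :=
  Classical.skolem.mp fun _ => IsAlgClosed.exists_pow_nat_eq _ two_pos

variable [CharZero k]

theorem signedGen_not_notMem_signChoiceIdeal (ε : Fin r × ℤ → Bool) {s : Fin r × ℤ} (hs : Even (n s.1)) :
    signedGen α n s (!ε s) ∉ signChoiceIdeal (signedGen α n) (fun s => Even (n s.1)) ε := by
  obtain ⟨ρ, hρ⟩ := exists_sq_eq_Bgen (α := α) (n := n)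
  intro hmem
  have h := signChoiceIdeal_le_ker_signedEval ε ρ hρ hmem
  rw [RingHom.mem_ker, signedEval_signedGen ε ρ hρ hs,
    IsScalarTower.algebraMap_apply k[X] (RatFunc k), map_eq_zero,
    IsFractionRing.to_map_eq_zero_iff] at h
  have h2 : ((if ε s then -1 else 1) - (if !ε s then -1 else 1) : k[X]) ≠ 0 := by
    cases ε s <;> norm_num
  exact mul_ne_zero h2 (halfGen_ne_zero s) h

variable (hα : ∀ i j : Fin r, ∀ t : ℤ, α i = α j + (t : k) → i = j)
include hα

theorem shiftedRoot_injective : Function.Injective fun s : Fin r × ℤ => α s.1 + (s.2 : k) := by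
  rintro ⟨i, j⟩ ⟨i', j'⟩ h
  obtain rfl : i = i' := hα i i' (j' - j) (by push_cast; linear_combination h)
  have : (j : k) = j' := by linear_combination h
  rw [Int.cast_inj.mp this]

theorem not_isSquare_prod_Bgen (S : Finset {s : Fin r × ℤ // Odd (n s.1)}) (hS : S.Nonempty) :
    ¬IsSquare (∏ t ∈ S, algebraMap k[X] (RatFunc k) (Bgen k α n t.1.1 t.1.2)) := by
  obtain ⟨t₀, ht₀⟩ := hS
  rw [← map_prod]
  refine not_isSquare_algebraMap_of_odd_rootMultiplicity (c := α t₀.1.1 + (t₀.1.2 : k)) ?_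
  simp only [Bgen]
  rw [rootMultiplicity_prod_X_sub_C_pow (a := fun t => α t.1.1 + (t.1.2 : k))
      ((shiftedRoot_injective hα).comp Subtype.val_injective).injOn _ ht₀]
  exact t₀.2

theorem linearIndependent_prod_sqrt_Bgen {ρ : Fin r × ℤ → AlgebraicClosure (RatFunc k)}
    (hρ : ∀ s, ρ s ^ 2 = algebraMap k[X] _ (Bgen k α n s.1 s.2)) :
    LinearIndependent k[X]
      fun S : Finset {s : Fin r × ℤ // Odd (n s.1)} => ∏ t ∈ S, ρ t := by
  have hσ : ∀ t : {s : Fin r × ℤ // Odd (n s.1)}, ρ t ^ 2 =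
      algebraMap (RatFunc k) _ (algebraMap k[X] (RatFunc k) (Bgen k α n t.1.1 t.1.2)) :=
    fun t => by rw [hρ, IsScalarTower.algebraMap_apply k[X] (RatFunc k)]
  exact (linearIndependent_prod_of_not_isSquare hσ (not_isSquare_prod_Bgen hα)).restrict_scalars'
    k[X]

theorem ker_signedEval (ε : Fin r × ℤ → Bool)
    {ρ : Fin r × ℤ → AlgebraicClosure (RatFunc k)}
    (hρ : ∀ s, ρ s ^ 2 = algebraMap k[X] _ (Bgen k α n s.1 s.2)) :
    RingHom.ker (signedEval α n ε ρ hρ) =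
      signChoiceIdeal (signedGen α n) (fun s => Even (n s.1)) ε := by
  have hI : ∀ s, ¬Odd (n s.1) →
      π (MvPolynomial.X s) - algebraMap k[X] _ ((if ε s then -1 else 1) * halfGen α n s) ∈
        signChoiceIdeal (signedGen α n) (fun s => Even (n s.1)) ε := fun s hs => by
    rw [← signedGen_eq]
    exact Ideal.subset_span ⟨s, Nat.not_odd_iff_even.mp hs, rfl⟩
  have hv : LinearIndependent k[X] ((signedEval α n ε ρ hρ).toLinearMap ∘
      fun S : Finset {s : Fin r × ℤ // Odd (n s.1)} =>
        ∏ t ∈ S, π (MvPolynomial.X t.1)) := by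
    convert linearIndependent_prod_sqrt_Bgen hα hρ with S
    simp only [Function.comp_apply, AlgHom.toLinearMap_apply, map_prod, signedEval_mk_X,
      signedValue]
    exact Finset.prod_congr rfl fun t _ => if_neg (Nat.not_even_iff_odd.mpr t.2)
  have := LinearMap.ker_eq_of_sup_span_eq_top (f := (signedEval α n ε ρ hρ).toLinearMap)
    (sup_squarefreeSpan_eq_top (fun s _ => mk_X_sq (α := α) (n := n) s) hI aeval_mk_X_surjective)
    (fun x hx => signChoiceIdeal_le_ker_signedEval ε ρ hρ hx) hv
  exact Ideal.ext fun x => SetLike.ext_iff.mp this x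

theorem signChoiceIdeal_isPrime (ε : Fin r × ℤ → Bool) :
    (signChoiceIdeal (signedGen α n) (fun s => Even (n s.1)) ε).IsPrime := by
  obtain ⟨ρ, hρ⟩ := exists_sq_eq_Bgen (α := α) (n := n)
  rw [← ker_signedEval hα ε hρ]
  exact RingHom.ker_isPrime _

end Bring

theorem Bring_minimalPrimes_general
    (k : Type) [Field k] [CharZero k] (r : ℕ) (α : Fin r → k) (n : Fin r → ℕ)
    (hα : ∀ i j : Fin r, ∀ t : ℤ, α i = α j + (t : k) → i = j) :
    ∀ p : Ideal (Bring k r α n),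
      p ∈ minimalPrimes (Bring k r α n) ↔
        ∃ ε : Fin r × ℤ → Bool,
          p = Ideal.span {b : Bring k r α n | ∃ (i : Fin r) (j : ℤ), Even (n i) ∧
            b = Ideal.Quotient.mk (Brel k r α n) (MvPolynomial.X (i, j)) -
              (if ε (i, j) then -1 else 1) *
                Ideal.Quotient.mk (Brel k r α n)
                  (MvPolynomial.C ((X - C (α i + (j : k))) ^ (n i / 2)))} := by
  intro p
  have h := mem_minimalPrimes_iff_exists_eq_signChoiceIdeal
    (fun s hs => Bring.signedGen_true_mul_signedGen_false hs) (Bring.signChoiceIdeal_isPrime hα)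
    (fun ε s hs => Bring.signedGen_not_notMem_signChoiceIdeal ε hs) p
  simp only [signChoiceIdeal, Prod.exists] at h
  exact h

/-- If some multiplicity `n_i` is even, then an ideal of `B` is a
minimal prime if and only if it is of the form
`p = (b_{i,j} − (−1)^{ε_{i,j}} σ^{−j}((z−α_i)^{n_i/2}) : n_i even, j ∈ ℤ)` for some choice
of signs `ε`. -/
theorem Bring_minimalPrimes
    (k : Type) [Field k] [CharZero k] [IsAlgClosed k] (r : ℕ) (α : Fin r → k) (n : Fin r → ℕ)
    (hn : ∀ i, 0 < n i)
    (hα : ∀ i j : Fin r, ∀ t : ℤ, α i = α j + (t : k) → i = j)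
    (hne : ∃ i, Even (n i)) :
    ∀ p : Ideal (Bring k r α n),
      p ∈ minimalPrimes (Bring k r α n) ↔
        ∃ ε : Fin r × ℤ → Bool,
          p = Ideal.span {b : Bring k r α n | ∃ (i : Fin r) (j : ℤ), Even (n i) ∧
            b = Ideal.Quotient.mk (Brel k r α n) (MvPolynomial.X (i, j)) -
              (if ε (i, j) then -1 else 1) *
                Ideal.Quotient.mk (Brel k r α n)
                  (MvPolynomial.C ((X - C (α i + (j : k))) ^ (n i / 2)))} :=
  Bring_minimalPrimes_general k r α n hα
end

section
/- The ring B = R[b_{i,j} : i ∈ [1,r], j ∈ ℤ]/(b_{i,j}² − σ^{−j}((z−α_i)^{n_i})) is reduced: the intersection of its minimal prime ideals is zero. -/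
open Polynomial

section Aux

local notation "MvP" => MvPolynomial

/-- Sign sum lemma: summing a product of signs over all subsets of `T` gives zero
when the index set `S` is nonempty. -/
lemma BAux.sum_sgn (Ω : Type*) [Field Ω] {σ : Type*} [DecidableEq σ] (T S : Finset σ)
    (hST : S ⊆ T) (hS : S.Nonempty) :
    ∑ U ∈ T.powerset, ∏ v ∈ S, (if v ∈ U then (1:Ω) else -1) = 0 := by
  classical
  obtain ⟨v₀, hv₀⟩ := hS
  have hv₀T : v₀ ∈ T := hST hv₀
  have hdisj : Disjoint ((T.erase v₀).powerset)
      (((T.erase v₀).powerset).image (insert v₀)) := by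
    rw [Finset.disjoint_left]
    intro U hU hU'
    obtain ⟨W, _, rfl⟩ := Finset.mem_image.1 hU'
    have : v₀ ∈ T.erase v₀ := Finset.mem_powerset.1 hU (Finset.mem_insert_self _ _)
    exact (Finset.mem_erase.1 this).1 rfl
  have hinj : ∀ U ∈ (T.erase v₀).powerset, ∀ W ∈ (T.erase v₀).powerset,
      insert v₀ U = insert v₀ W → U = W := by
    intro U hU W hW h
    have hU0 : v₀ ∉ U := fun hc =>
      (Finset.mem_erase.1 (Finset.mem_powerset.1 hU hc)).1 rfl
    have hW0 : v₀ ∉ W := fun hc =>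
      (Finset.mem_erase.1 (Finset.mem_powerset.1 hW hc)).1 rfl
    rw [← Finset.erase_insert hU0, ← Finset.erase_insert hW0, h]
  rw [← Finset.insert_erase hv₀T, Finset.powerset_insert, Finset.sum_union hdisj,
    Finset.sum_image hinj, ← Finset.sum_add_distrib]
  refine Finset.sum_eq_zero fun U hU => ?_
  have hv₀U : v₀ ∉ U := fun hc =>
    (Finset.mem_erase.1 (Finset.mem_powerset.1 hU hc)).1 rfl
  rw [← Finset.mul_prod_erase S _ hv₀, ← Finset.mul_prod_erase S _ hv₀]
  have h3 : ∏ v ∈ S.erase v₀, (if v ∈ insert v₀ U then (1:Ω) else -1)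
      = ∏ v ∈ S.erase v₀, (if v ∈ U then (1:Ω) else -1) := by
    refine Finset.prod_congr rfl fun v hv => ?_
    have hne : v ≠ v₀ := (Finset.mem_erase.1 hv).1
    simp [Finset.mem_insert, hne]
  rw [h3, if_neg hv₀U, if_pos (Finset.mem_insert_self _ _)]
  ring

/-- Product of signs over two sets equals product over the symmetric difference. -/
lemma BAux.prod_sgn_mul (Ω : Type*) [Field Ω] {σ : Type*} [DecidableEq σ]
    (U A B : Finset σ) :
    (∏ v ∈ A, (if v ∈ U then (1:Ω) else -1)) * ∏ v ∈ B, (if v ∈ U then (1:Ω) else -1)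
      = ∏ v ∈ (A \ B) ∪ (B \ A), (if v ∈ U then (1:Ω) else -1) := by
  set f : σ → Ω := fun v => if v ∈ U then (1:Ω) else -1 with hf
  have hsq : ∀ C : Finset σ, (∏ v ∈ C, f v) * ∏ v ∈ C, f v = 1 := by
    intro C; rw [← Finset.prod_mul_distrib]
    refine Finset.prod_eq_one fun v _ => ?_
    by_cases h : v ∈ U <;> simp [hf, h]
  rw [Finset.prod_union disjoint_sdiff_sdiff,
    ← Finset.prod_inter_mul_prod_diff A B f, ← Finset.prod_inter_mul_prod_diff B A f,
    Finset.inter_comm B A]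
  calc ((∏ v ∈ A ∩ B, f v) * ∏ v ∈ A \ B, f v) * ((∏ v ∈ A ∩ B, f v) * ∏ v ∈ B \ A, f v)
      = ((∏ v ∈ A ∩ B, f v) * (∏ v ∈ A ∩ B, f v))
          * ((∏ v ∈ A \ B, f v) * ∏ v ∈ B \ A, f v) := by ring
    _ = (∏ v ∈ A \ B, f v) * ∏ v ∈ B \ A, f v := by rw [hsq]; ring

/-- A multilinear polynomial vanishing under all sign evaluations is zero. -/
lemma BAux.multilinear_zero {σ A Ω : Type*} [DecidableEq σ] [CommRing A] [Field Ω]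
    [CharZero Ω] (φ : A →+* Ω) (hφ : Function.Injective φ) (ρ : σ → Ω)
    (hρ : ∀ v, ρ v ≠ 0) (q : MvP σ A)
    (hq : ∀ d ∈ q.support, ∀ v, d v ≤ 1)
    (h : ∀ U : Finset σ,
      MvPolynomial.eval₂ φ (fun v => (if v ∈ U then (1:Ω) else -1) * ρ v) q = 0) :
    q = 0 := by
  classical
  ext d₀
  rw [MvPolynomial.coeff_zero]
  by_cases hd₀ : d₀ ∈ q.support
  swap
  · exact MvPolynomial.notMem_support_iff.1 hd₀
  set T := q.support.sup Finsupp.support with hT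
  have hsub : ∀ d ∈ q.support, d.support ⊆ T := fun d hd => Finset.le_sup hd
  have hone : ∀ d ∈ q.support, ∀ U : Finset σ,
      (∏ v ∈ d.support, ((if v ∈ U then (1:Ω) else -1) * ρ v) ^ d v)
        = (∏ v ∈ d.support, (if v ∈ U then (1:Ω) else -1)) * ∏ v ∈ d.support, ρ v := by
    intro d hd U
    rw [← Finset.prod_mul_distrib]
    refine Finset.prod_congr rfl fun v hv => ?_
    have h1 : d v = 1 :=
      le_antisymm (hq d hd v) (Nat.one_le_iff_ne_zero.2 (Finsupp.mem_support_iff.1 hv))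
    rw [h1, pow_one]
  have main : (0:Ω)
      = (φ (MvPolynomial.coeff d₀ q) * ∏ v ∈ d₀.support, ρ v) * 2 ^ T.card := by
    calc (0:Ω)
        = ∑ U ∈ T.powerset, (∏ v ∈ d₀.support, (if v ∈ U then (1:Ω) else -1))
            * MvPolynomial.eval₂ φ (fun v => (if v ∈ U then (1:Ω) else -1) * ρ v) q :=
          (Finset.sum_eq_zero fun U _ => by rw [h U, mul_zero]).symm
      _ = ∑ U ∈ T.powerset, ∑ d ∈ q.support,
            (φ (MvPolynomial.coeff d q) * ∏ v ∈ d.support, ρ v)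
              * ∏ v ∈ (d₀.support \ d.support) ∪ (d.support \ d₀.support),
                  (if v ∈ U then (1:Ω) else -1) := by
          refine Finset.sum_congr rfl fun U _ => ?_
          rw [MvPolynomial.eval₂_eq, Finset.mul_sum]
          refine Finset.sum_congr rfl fun d hd => ?_
          rw [hone d hd U, ← BAux.prod_sgn_mul Ω U d₀.support d.support]
          ring
      _ = ∑ d ∈ q.support, (φ (MvPolynomial.coeff d q) * ∏ v ∈ d.support, ρ v)
            * ∑ U ∈ T.powerset,
                ∏ v ∈ (d₀.support \ d.support) ∪ (d.support \ d₀.support),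
                  (if v ∈ U then (1:Ω) else -1) := by
          rw [Finset.sum_comm]
          exact Finset.sum_congr rfl fun d _ => by rw [Finset.mul_sum]
      _ = (φ (MvPolynomial.coeff d₀ q) * ∏ v ∈ d₀.support, ρ v) * 2 ^ T.card := by
          rw [Finset.sum_eq_single d₀]
          · rw [Finset.sdiff_self, Finset.union_empty]
            simp only [Finset.prod_empty, Finset.sum_const, Finset.card_powerset,
              nsmul_eq_mul, mul_one]
            push_cast
            ring
          · intro d hd hne
            have hSsub : (d₀.support \ d.support) ∪ (d.support \ d₀.support) ⊆ T :=
              Finset.union_subset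
                ((Finset.sdiff_subset).trans (hsub d₀ hd₀))
                ((Finset.sdiff_subset).trans (hsub d hd))
            have hSne : ((d₀.support \ d.support) ∪ (d.support \ d₀.support)).Nonempty := by
              rw [Finset.nonempty_iff_ne_empty]
              intro hc
              rw [Finset.union_eq_empty] at hc
              have h1 : d₀.support ⊆ d.support :=
                Finset.sdiff_eq_empty_iff_subset.1 hc.1
              have h2 : d.support ⊆ d₀.support :=
                Finset.sdiff_eq_empty_iff_subset.1 hc.2
              have hde : d = d₀ := by
                ext v
                by_cases hv : v ∈ d.support
                · have hv' : v ∈ d₀.support := h2 hv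
                  have e1 := Finsupp.mem_support_iff.1 hv
                  have e2 := Finsupp.mem_support_iff.1 hv'
                  have := hq d hd v
                  have := hq d₀ hd₀ v
                  omega
                · have hv' : v ∉ d₀.support := fun hc' => hv (h1 hc')
                  rw [Finsupp.notMem_support_iff.1 hv,
                    Finsupp.notMem_support_iff.1 hv']
              exact hne hde
            rw [BAux.sum_sgn Ω T _ hSsub hSne, mul_zero]
          · intro hc
            exact absurd hd₀ hc
  have hcoeff : φ (MvPolynomial.coeff d₀ q) = 0 := by
    have h2 : (2:Ω) ^ T.card ≠ 0 := pow_ne_zero _ two_ne_zero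
    have hρ0 : (∏ v ∈ d₀.support, ρ v) ≠ 0 := Finset.prod_ne_zero_iff.2 fun v _ => hρ v
    rcases mul_eq_zero.1 main.symm with h' | h'
    · rcases mul_eq_zero.1 h' with h'' | h''
      · exact h''
      · exact absurd h'' hρ0
    · exact absurd h' h2
  exact hφ (hcoeff.trans (map_zero φ).symm)

/-- Normal form: every polynomial is congruent mod `I` to a multilinear one. -/
lemma BAux.normal_form {σ A : Type*} [DecidableEq σ] [CommRing A] (g : σ → A)
    (I : Ideal (MvP σ A)) (hI : ∀ v, MvPolynomial.X v ^ 2 - MvPolynomial.C (g v) ∈ I)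
    (p : MvP σ A) :
    ∃ q : MvP σ A, (∀ d ∈ q.support, ∀ v, d v ≤ 1) ∧
      Ideal.Quotient.mk I p = Ideal.Quotient.mk I q := by
  classical
  induction p using MvPolynomial.induction_on' with
  | add p1 p2 ih1 ih2 =>
    obtain ⟨q1, hq1, e1⟩ := ih1
    obtain ⟨q2, hq2, e2⟩ := ih2
    refine ⟨q1 + q2, ?_, by rw [map_add, e1, e2, map_add]⟩
    intro d hd v
    rcases Finset.mem_union.1 (MvPolynomial.support_add hd) with h | h
    · exact hq1 d h v
    · exact hq2 d h v
  | monomial d a =>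
    set e : σ →₀ ℕ := Finsupp.mapRange (· % 2) (by norm_num) d with he
    have heapp : ∀ v, e v = d v % 2 := fun v => Finsupp.mapRange_apply
    refine ⟨MvPolynomial.monomial e (a * ∏ v ∈ d.support, g v ^ (d v / 2)), ?_, ?_⟩
    · intro d' hd' v
      have : d' = e := Finset.mem_singleton.1 (MvPolynomial.support_monomial_subset hd')
      rw [this, heapp]
      omega
    · have key : ∀ (v : σ) (m : ℕ), (Ideal.Quotient.mk I) (MvPolynomial.X v) ^ m
          = (Ideal.Quotient.mk I) (MvPolynomial.C (g v)) ^ (m / 2)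
              * (Ideal.Quotient.mk I) (MvPolynomial.X v) ^ (m % 2) := by
        intro v m
        have h2 : (Ideal.Quotient.mk I) (MvPolynomial.X v) ^ 2
            = (Ideal.Quotient.mk I) (MvPolynomial.C (g v)) := by
          rw [← map_pow, Ideal.Quotient.eq]
          exact hI v
        conv_lhs => rw [← Nat.div_add_mod m 2]
        rw [pow_add, pow_mul, h2]
      rw [MvPolynomial.monomial_eq, MvPolynomial.monomial_eq, Finsupp.prod, Finsupp.prod]
      simp only [map_mul, map_prod, map_pow]
      have he2 : ∏ v ∈ e.support, (Ideal.Quotient.mk I) (MvPolynomial.X v) ^ e v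
          = ∏ v ∈ d.support, (Ideal.Quotient.mk I) (MvPolynomial.X v) ^ (d v % 2) := by
        rw [Finset.prod_subset Finsupp.support_mapRange
          (fun v hv hnv => by rw [Finsupp.notMem_support_iff.1 hnv, pow_zero])]
        exact Finset.prod_congr rfl fun v _ => by rw [heapp]
      rw [he2, Finset.prod_congr rfl (fun v _ => key v (d v)), Finset.prod_mul_distrib,
        mul_assoc]

end Aux

/-- The ring `B` is reduced: the intersection of its minimal primes
is zero. -/
theorem Bring_isReduced
    (k : Type) [Field k] [CharZero k] [IsAlgClosed k] (r : ℕ) (α : Fin r → k) (n : Fin r → ℕ)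
    (hn : ∀ i, 0 < n i)
    (hα : ∀ i j : Fin r, ∀ t : ℤ, α i = α j + (t : k) → i = j) :
    IsReduced (Bring k r α n) := by
  classical
  set Ω := AlgebraicClosure (FractionRing k[X]) with hΩ
  set φ : k[X] →+* Ω :=
    (algebraMap (FractionRing k[X]) Ω).comp (algebraMap k[X] (FractionRing k[X])) with hφdef
  have hφ : Function.Injective φ := by
    rw [hφdef, RingHom.coe_comp]
    exact (RingHom.injective _).comp (IsFractionRing.injective k[X] (FractionRing k[X]))
  set g : Fin r × ℤ → k[X] := fun v => Bgen k α n v.1 v.2 with hg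
  have hρex : ∀ v : Fin r × ℤ, ∃ s : Ω, s ^ 2 = φ (g v) ∧ s ≠ 0 := by
    intro v
    obtain ⟨s, hs⟩ := IsAlgClosed.exists_pow_nat_eq (φ (g v)) (n := 2) (by norm_num)
    refine ⟨s, hs, fun h0 => ?_⟩
    rw [h0, zero_pow (by norm_num)] at hs
    have hgne : g v ≠ 0 := by
      rw [hg]
      exact pow_ne_zero _ (Polynomial.X_sub_C_ne_zero _)
    exact hgne (hφ ((hs.symm.trans (map_zero φ).symm)))
  choose ρ hρsq hρ0 using hρex
  have hgen : ∀ v : Fin r × ℤ,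
      MvPolynomial.X v ^ 2 - MvPolynomial.C (g v) ∈ Brel k r α n := by
    intro v
    exact Ideal.subset_span ⟨v.1, v.2, by rw [hg]⟩
  have hker : ∀ U : Finset (Fin r × ℤ), ∀ p ∈ Brel k r α n,
      MvPolynomial.eval₂ φ (fun v => (if v ∈ U then (1:Ω) else -1) * ρ v) p = 0 := by
    intro U
    have : Brel k r α n ≤
        RingHom.ker (MvPolynomial.eval₂Hom φ (fun v => (if v ∈ U then (1:Ω) else -1) * ρ v)) := by
      rw [Brel, Ideal.span_le]
      rintro p ⟨i, j, rfl⟩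
      simp only [SetLike.mem_coe, RingHom.mem_ker, map_sub, map_pow,
        MvPolynomial.eval₂Hom_X', MvPolynomial.eval₂Hom_C]
      have hsq : ((if (i, j) ∈ U then (1:Ω) else -1) * ρ (i, j)) ^ 2 = ρ (i, j) ^ 2 := by
        rw [mul_pow]
        by_cases h : (i, j) ∈ U <;> simp [h]
      rw [hsq, hρsq (i, j)]
      simp [hg]
    intro p hp
    exact this hp
  refine ⟨fun x hx => ?_⟩
  obtain ⟨p, rfl⟩ := Ideal.Quotient.mk_surjective x
  obtain ⟨m, hm⟩ := hx
  rw [← map_pow, Ideal.Quotient.eq_zero_iff_mem] at hm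
  obtain ⟨q, hq, hpq⟩ := BAux.normal_form g (Brel k r α n) hgen p
  rw [hpq]
  suffices hq0 : q = 0 by rw [hq0, map_zero]
  refine BAux.multilinear_zero φ hφ ρ hρ0 q hq fun U => ?_
  have hEpq : MvPolynomial.eval₂ φ (fun v => (if v ∈ U then (1:Ω) else -1) * ρ v) (q - p) = 0 := by
    refine hker U _ ?_
    rw [← Ideal.Quotient.eq]
    exact hpq.symm
  have hEm : (MvPolynomial.eval₂ φ (fun v => (if v ∈ U then (1:Ω) else -1) * ρ v) p) ^ m = 0 := by
    rw [← MvPolynomial.eval₂_pow]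
    exact hker U _ hm
  have hEp : MvPolynomial.eval₂ φ (fun v => (if v ∈ U then (1:Ω) else -1) * ρ v) p = 0 := by
    rcases Nat.eq_zero_or_pos m with hm0 | hm0
    · rw [hm0, pow_zero] at hEm
      exact absurd hEm one_ne_zero
    · exact pow_eq_zero_iff (Nat.pos_iff_ne_zero.1 hm0) |>.1 hEm
  have hsub := MvPolynomial.eval₂_sub q (q := p) φ (fun v => (if v ∈ U then (1:Ω) else -1) * ρ v)
  rw [hEpq, hEp, sub_zero] at hsub
  exact hsub.symm
end
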